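/- arXiv:1101.5830 — 6 statements merged into one kernel-verified Lean document; each statement's English description precedes it below -/
import Mathlib

section
/- For all integers r ≥ 2 and l ≥ 1 there is an integer n₀ = n₀(r,l) such that every r-graph H on n > n₀ vertices with at least n^(r − 1/l^(r−1)) edges contains a K^(r)(l), i.e., there exist pairwise disjoint l-element vertex sets V₁, …, V_r such that every r-element set containing exactly one vertex from each Vᵢ is an edge of H. -/
/-!
Induction on `r`, following Erdős. For an `(r+1)`-graph `H` and an `r`-set `S`, the link of `S`
is the set of vertices `v ∉ S` with `S ∪ {v} ∈ H`; the links have total size `(r+1)|H|`. By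
convexity of `d ↦ (d choose l)`, some `l`-set `L` lies in the links of at least
`(3/2)^l n^(r - 1/l^(r-1))` of the `r`-sets. These `r`-sets form an `r`-graph (the common link
of `L`), which by induction contains a `K^(r)(l)`; its parts avoid `L`, and adjoining `L` as a new
part gives a `K^(r+1)(l)` in `H`. The factor `(3/2)^l ≥ l` also covers the base case `r = 1`,
where `l` edges are needed although `n^(1 - 1/l^0) = 1`.
-/

open Finset
open scoped Nat

lemma natCast_le_three_halves_pow (l : ℕ) : (l : ℝ) ≤ (3 / 2) ^ l := by
  induction l with
  | zero => norm_num
  | succ k ih =>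
    rcases Nat.lt_or_ge k 2 with hk | hk
    · interval_cases k <;> norm_num
    · have hk' : (2 : ℝ) ≤ k := by exact_mod_cast hk
      calc ((k + 1 : ℕ) : ℝ) ≤ 3 / 2 * k := by push_cast; linarith
        _ ≤ 3 / 2 * (3 / 2) ^ k := by gcongr
        _ = (3 / 2) ^ (k + 1) := by ring

lemma pow_le_factorial_mul_card_pow_mul_sum_choose {ι : Type*} (s : Finset ι) (d : ι → ℕ)
    {l : ℕ} (hl : 1 ≤ l) {x : ℝ} (hx₀ : 0 ≤ x)
    (hx : x ≤ ∑ i ∈ s, (d i : ℝ) - ((l : ℝ) - 1) * #s) :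
    x ^ l ≤ l ! * (#s : ℝ) ^ (l - 1) * ∑ i ∈ s, ((d i).choose l : ℝ) := by
  obtain ⟨k, rfl⟩ := Nat.exists_eq_add_of_le' hl
  have hsum : x ≤ ∑ i ∈ s, ((d i - k : ℕ) : ℝ) := by
    refine hx.trans ?_
    rw [mul_comm, ← nsmul_eq_mul, ← sum_const, ← sum_sub_distrib]
    refine sum_le_sum fun i _ => ?_
    push_cast
    rw [add_sub_cancel_right]
    exact sub_le_iff_le_add.mpr (by exact_mod_cast (le_tsub_add : d i ≤ d i - k + k))
  have hterm : ∀ i ∈ s,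
      ((d i - k : ℕ) : ℝ) ^ (k + 1) ≤ (k + 1)! * ((d i).choose (k + 1) : ℝ) := fun i _ => by
      have h := Nat.pow_sub_le_descFactorial (d i) (k + 1)
      rw [Nat.descFactorial_eq_factorial_mul_choose, Nat.add_sub_add_right] at h
      exact_mod_cast h
  calc x ^ (k + 1) ≤ (∑ i ∈ s, ((d i - k : ℕ) : ℝ)) ^ (k + 1) := by gcongr
    _ ≤ (#s : ℝ) ^ k * ∑ i ∈ s, ((d i - k : ℕ) : ℝ) ^ (k + 1) :=
        pow_sum_le_card_mul_sum_pow (fun i _ => Nat.cast_nonneg _) k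
    _ ≤ (#s : ℝ) ^ k * ∑ i ∈ s, (k + 1)! * ((d i).choose (k + 1) : ℝ) := by
        gcongr with i hi
        exact hterm i hi
    _ = (k + 1)! * (#s : ℝ) ^ (k + 1 - 1) * ∑ i ∈ s, ((d i).choose (k + 1) : ℝ) := by
        rw [← mul_sum, Nat.add_sub_cancel]
        ring

lemma two_mul_sub_one_mul_pow_le_rpow {n l r : ℕ} (hl : 1 ≤ l) (hr : 1 ≤ r)
    (hn : 4 * l ^ 2 ≤ n) :
    2 * ((l : ℝ) - 1) * (n : ℝ) ^ r ≤ (n : ℝ) ^ ((r : ℝ) + 1 - 1 / (l : ℝ) ^ r) := by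
  have hn₀ : (0 : ℝ) < n := by
    have : 0 < n := by nlinarith
    exact_mod_cast this
  have hsplit : (n : ℝ) ^ ((r : ℝ) + 1 - 1 / (l : ℝ) ^ r) =
      (n : ℝ) ^ r * (n : ℝ) ^ (1 - 1 / (l : ℝ) ^ r) := by
    rw [← Real.rpow_natCast (n : ℝ) r, ← Real.rpow_add hn₀]
    ring_nf
  rw [hsplit, mul_comm _ ((n : ℝ) ^ r)]
  gcongr
  rcases hl.eq_or_lt with rfl | hl₂
  · simp
  have hl₂' : (2 : ℝ) ≤ l := by exact_mod_cast hl₂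
  have hinv : 1 / (l : ℝ) ^ r ≤ 1 / 2 :=
    one_div_le_one_div_of_le (by norm_num) (hl₂'.trans (le_self_pow₀ (by linarith) (by omega)))
  have hsqrt : 2 * (l : ℝ) ≤ Real.sqrt n := by
    rw [Real.le_sqrt (by positivity) hn₀.le]
    exact_mod_cast (by nlinarith : (2 * l) ^ 2 ≤ n)
  calc 2 * ((l : ℝ) - 1) ≤ Real.sqrt n := by linarith
    _ = (n : ℝ) ^ (1 / 2 : ℝ) := Real.sqrt_eq_rpow _
    _ ≤ (n : ℝ) ^ (1 - 1 / (l : ℝ) ^ r) :=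
        Real.rpow_le_rpow_of_exponent_le (by exact_mod_cast hn₀) (by linarith)

lemma rpow_pow_eq_pow_mul_rpow {x : ℝ} (hx : 0 < x) {l r : ℕ} (hl : 1 ≤ l) (hr : 1 ≤ r) :
    (x ^ ((r : ℝ) + 1 - 1 / (l : ℝ) ^ r)) ^ l =
      x ^ (r * (l - 1) + l) * x ^ ((r : ℝ) - 1 / (l : ℝ) ^ (r - 1)) := by
  rw [← Real.rpow_natCast (x ^ _) l, ← Real.rpow_mul hx.le,
    ← Real.rpow_natCast x (r * (l - 1) + l), ← Real.rpow_add hx]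
  congr 1
  obtain ⟨k, rfl⟩ := Nat.exists_eq_add_of_le' hr
  have hl₀ : (l : ℝ) ≠ 0 := by positivity
  push_cast [Nat.cast_sub hl]
  field_simp
  ring

namespace Hypergraph

variable {V : Type*} [DecidableEq V]

def ContainsCompletePartite (H : Finset (Finset V)) (r l : ℕ) : Prop :=
  ∃ f : Fin r → Finset V, (∀ i, #(f i) = l) ∧ (Pairwise fun i j => Disjoint (f i) (f j)) ∧
    ∀ e : Finset V, #e = r → (∀ i, #(e ∩ f i) = 1) → e ∈ H

lemma image_inter_eq_singleton {r : ℕ} {f : Fin r → Finset V}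
    (hf : Pairwise fun i j => Disjoint (f i) (f j)) {p : Fin r → V} (hp : ∀ i, p i ∈ f i)
    (i : Fin r) : univ.image p ∩ f i = {p i} := by
  ext w
  simp only [mem_inter, mem_image, mem_univ, true_and, mem_singleton]
  constructor
  · rintro ⟨⟨j, rfl⟩, hj⟩
    by_contra hne
    exact disjoint_left.mp (hf fun hji => hne (congrArg p hji)) (hp j) hj
  · rintro rfl
    exact ⟨⟨i, rfl⟩, hp i⟩

lemma card_image_of_pairwise_disjoint {r : ℕ} {f : Fin r → Finset V}
    (hf : Pairwise fun i j => Disjoint (f i) (f j)) {p : Fin r → V} (hp : ∀ i, p i ∈ f i) :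
    #(univ.image p) = r := by
  rw [card_image_of_injective, card_univ, Fintype.card_fin]
  intro i j hij
  by_contra hne
  exact disjoint_left.mp (hf hne) (hp i) (hij ▸ hp j)

variable [Fintype V]

lemma containsCompletePartite_one {H : Finset (Finset V)} {l : ℕ} (hH : ∀ e ∈ H, #e = 1)
    (hl : l ≤ #H) : ContainsCompletePartite H 1 l := by
  set W : Finset V := {v | {v} ∈ H}
  have hHW : H ⊆ W.image ({·}) := by
    intro e he
    obtain ⟨v, rfl⟩ := card_eq_one.mp (hH e he)
    exact mem_image.mpr ⟨v, by simpa [W] using he, rfl⟩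
  obtain ⟨U, hUW, hU⟩ :=
    exists_subset_card_eq (hl.trans ((card_le_card hHW).trans card_image_le))
  refine ⟨fun _ => U, fun _ => hU, Subsingleton.pairwise, fun e he hcap => ?_⟩
  obtain ⟨v, rfl⟩ := card_eq_one.mp he
  have hv : v ∈ U := by
    by_contra hv
    simpa [singleton_inter_of_notMem hv] using hcap 0
  simpa [W] using hUW hv

def link (H : Finset (Finset V)) (S : Finset V) : Finset V := {v | v ∉ S ∧ insert v S ∈ H}

def commonLink (H : Finset (Finset V)) (r : ℕ) (L : Finset V) : Finset (Finset V) :=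
  {S ∈ powersetCard r univ | L ⊆ link H S}

@[simp] lemma mem_link {H : Finset (Finset V)} {S : Finset V} {v : V} :
    v ∈ link H S ↔ v ∉ S ∧ insert v S ∈ H := by
  simp [link]

@[simp] lemma mem_commonLink {H : Finset (Finset V)} {r : ℕ} {L S : Finset V} :
    S ∈ commonLink H r L ↔ #S = r ∧ L ⊆ link H S := by
  simp [commonLink]

lemma ContainsCompletePartite.of_commonLink {H : Finset (Finset V)} {r l : ℕ} {L : Finset V}
    (hL : #L = l) (h : ContainsCompletePartite (commonLink H r L) r l) :
    ContainsCompletePartite H (r + 1) l := by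
  obtain ⟨f, hf, hdisj, hcomplete⟩ := h
  -- A part meeting `L` at `u` yields a transversal through `u`, whose link contains `u`.
  have hdisjL : ∀ i, Disjoint (f i) L := by
    intro i
    refine disjoint_left.mpr fun u hu huL => ?_
    have hne : ∀ j, (f j).Nonempty := fun j => by
      rw [← card_pos, hf j, ← hf i]
      exact card_pos.mpr ⟨u, hu⟩
    choose p hp using hne
    have hq : ∀ j, Function.update p i u j ∈ f j := fun j => by
      rcases eq_or_ne j i with rfl | hji
      · simpa using hu
      · simpa [hji] using hp j
    have hmem := hcomplete _ (card_image_of_pairwise_disjoint hdisj hq)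
      fun j => by rw [image_inter_eq_singleton hdisj hq, card_singleton]
    have hu' := (mem_link.mp ((mem_commonLink.mp hmem).2 huL)).1
    exact hu' (mem_image.mpr ⟨i, mem_univ _, by simp⟩)
  refine ⟨Fin.cons L f, Fin.cons hL hf, ?_, ?_⟩
  · refine pairwise_fin_succ_iff.mpr ⟨fun i => ?_, fun j => ?_, fun i j hij => ?_⟩
    · simpa using hdisjL i
    · simpa using (hdisjL j).symm
    · simpa using hdisj hij
  · intro e he hcap
    rw [Fin.forall_fin_succ] at hcap
    obtain ⟨hcapL, hcapf⟩ := hcap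
    obtain ⟨v, hv⟩ := card_eq_one.mp hcapL
    have hve : v ∈ e ∧ v ∈ L := mem_inter.mp (hv ▸ mem_singleton_self v)
    have herase : ∀ j, e.erase v ∩ f j = e ∩ f j := fun j => by
      rw [erase_inter, erase_eq_of_notMem]
      exact fun h => disjoint_left.mp (hdisjL j) (mem_inter.mp h).2 hve.2
    have hmem := hcomplete (e.erase v) (by rw [card_erase_of_mem hve.1, he]; rfl)
      fun j => by simpa [herase] using hcapf j
    have hv' := mem_link.mp ((mem_commonLink.mp hmem).2 hve.2)
    exact insert_erase hve.1 ▸ hv'.2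

lemma filter_powersetCard_univ_subset (s : Finset V) (k : ℕ) :
    {T ∈ powersetCard k (univ : Finset V) | T ⊆ s} = powersetCard k s := by
  ext T
  simp only [mem_filter, mem_powersetCard, subset_univ, true_and]
  tauto

lemma card_link {H : Finset (Finset V)} {r : ℕ} (hH : ∀ e ∈ H, #e = r + 1) {S : Finset V}
    (hS : #S = r) : #(link H S) = #{e ∈ H | S ⊆ e} := by
  refine card_nbij (fun v => insert v S) (fun v hv => ?_) (fun v hv _ _ hvw => ?_) ?_
  · have hv := mem_link.mp hv
    exact mem_filter.mpr ⟨hv.2, subset_insert v S⟩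
  · exact (insert_inj (mem_link.mp hv).1).mp hvw
  · intro e he
    obtain ⟨heH, hSe⟩ := mem_filter.mp he
    obtain ⟨v, hvS, rfl⟩ := exists_eq_insert_iff.mpr ⟨hSe, by rw [hS, hH e heH]⟩
    exact ⟨v, mem_link.mpr ⟨hvS, heH⟩, rfl⟩

lemma sum_card_link {H : Finset (Finset V)} {r : ℕ} (hH : ∀ e ∈ H, #e = r + 1) :
    ∑ S ∈ powersetCard r univ, #(link H S) = (r + 1) * #H := by
  calc ∑ S ∈ powersetCard r univ, #(link H S)
      = ∑ S ∈ powersetCard r univ, #(H.bipartiteAbove (· ⊆ ·) S) :=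
        sum_congr rfl fun S hS => card_link hH (mem_powersetCard.mp hS).2
    _ = ∑ e ∈ H, #((powersetCard r univ).bipartiteBelow (· ⊆ ·) e) :=
        sum_card_bipartiteAbove_eq_sum_card_bipartiteBelow _
    _ = ∑ e ∈ H, (r + 1) := sum_congr rfl fun e he => by
        rw [bipartiteBelow, filter_powersetCard_univ_subset, card_powersetCard, hH e he,
          Nat.choose_succ_self_right]
    _ = (r + 1) * #H := by rw [sum_const, smul_eq_mul, mul_comm]

lemma sum_card_filter_subset {ι : Type*} (s : Finset ι) (A : ι → Finset V) (l : ℕ) :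
    ∑ L ∈ powersetCard l univ, #{i ∈ s | L ⊆ A i} = ∑ i ∈ s, (#(A i)).choose l :=
  (sum_card_bipartiteAbove_eq_sum_card_bipartiteBelow _).trans <| sum_congr rfl fun i _ => by
    rw [bipartiteBelow, filter_powersetCard_univ_subset, card_powersetCard]

lemma sum_card_commonLink (H : Finset (Finset V)) (r l : ℕ) :
    ∑ L ∈ powersetCard l univ, #(commonLink H r L) =
      ∑ S ∈ powersetCard r univ, (#(link H S)).choose l :=
  sum_card_filter_subset _ _ l

lemma pow_le_factorial_mul_pow_mul_sum_card_commonLink {H : Finset (Finset V)} {r l : ℕ}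
    (hr : 1 ≤ r) (hl : 1 ≤ l) (hn : 4 * l ^ 2 ≤ Fintype.card V) (hH : ∀ e ∈ H, #e = r + 1)
    (hHcard : (Fintype.card V : ℝ) ^ ((r : ℝ) + 1 - 1 / (l : ℝ) ^ r) ≤ #H) :
    (3 / 2 * (Fintype.card V : ℝ) ^ ((r : ℝ) + 1 - 1 / (l : ℝ) ^ r)) ^ l ≤
      l ! * (Fintype.card V : ℝ) ^ (r * (l - 1)) *
        ∑ L ∈ powersetCard l univ, (#(commonLink H r L) : ℝ) := by
  set n := Fintype.card V
  set u : ℝ := (n : ℝ) ^ ((r : ℝ) + 1 - 1 / (l : ℝ) ^ r)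
  have hrs : (#(powersetCard r (univ : Finset V)) : ℝ) ≤ (n : ℝ) ^ r := by
    rw [card_powersetCard, card_univ]
    exact_mod_cast Nat.choose_le_pow n r
  have hl' : (0 : ℝ) ≤ (l : ℝ) - 1 := by
    have : (1 : ℝ) ≤ l := by exact_mod_cast hl
    linarith
  have hdeg : 3 / 2 * u ≤ ∑ S ∈ powersetCard r univ, (#(link H S) : ℝ) -
      ((l : ℝ) - 1) * #(powersetCard r (univ : Finset V)) := by
    have hsum : ∑ S ∈ powersetCard r univ, (#(link H S) : ℝ) = (r + 1) * #H := by
      exact_mod_cast sum_card_link hH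
    have hr' : (1 : ℝ) ≤ r := by exact_mod_cast hr
    have hu₀ : 0 ≤ u := by positivity
    nlinarith [two_mul_sub_one_mul_pow_le_rpow hl hr hn, mul_le_mul_of_nonneg_left hrs hl']
  have hcount : ∑ S ∈ powersetCard r univ, ((#(link H S)).choose l : ℝ) =
      ∑ L ∈ powersetCard l univ, (#(commonLink H r L) : ℝ) := by
    exact_mod_cast (sum_card_commonLink H r l).symm
  calc (3 / 2 * u) ^ l
      ≤ l ! * (#(powersetCard r (univ : Finset V)) : ℝ) ^ (l - 1) *
          ∑ L ∈ powersetCard l univ, (#(commonLink H r L) : ℝ) := by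
        rw [← hcount]
        exact pow_le_factorial_mul_card_pow_mul_sum_choose _ _ hl (by positivity) hdeg
    _ ≤ l ! * ((n : ℝ) ^ r) ^ (l - 1) *
          ∑ L ∈ powersetCard l univ, (#(commonLink H r L) : ℝ) :=
        mul_le_mul_of_nonneg_right (mul_le_mul_of_nonneg_left
          (pow_le_pow_left₀ (Nat.cast_nonneg _) hrs _) (Nat.cast_nonneg _))
          (sum_nonneg fun _ _ => Nat.cast_nonneg _)
    _ = l ! * (n : ℝ) ^ (r * (l - 1)) *
          ∑ L ∈ powersetCard l univ, (#(commonLink H r L) : ℝ) := by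
        rw [pow_mul]

theorem exists_le_card_commonLink {H : Finset (Finset V)} {r l : ℕ} (hr : 1 ≤ r) (hl : 1 ≤ l)
    (hn : 4 * l ^ 2 ≤ Fintype.card V) (hH : ∀ e ∈ H, #e = r + 1)
    (hHcard : (Fintype.card V : ℝ) ^ ((r : ℝ) + 1 - 1 / (l : ℝ) ^ r) ≤ #H) :
    ∃ L ∈ powersetCard l univ,
      (3 / 2) ^ l * (Fintype.card V : ℝ) ^ ((r : ℝ) - 1 / (l : ℝ) ^ (r - 1)) ≤
        #(commonLink H r L) := by
  set n := Fintype.card V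
  set t : ℝ := (3 / 2) ^ l * (n : ℝ) ^ ((r : ℝ) - 1 / (l : ℝ) ^ (r - 1))
  set total : ℝ := ∑ L ∈ powersetCard l univ, (#(commonLink H r L) : ℝ)
  have hn₀ : (0 : ℝ) < n := by
    have : 0 < n := by nlinarith
    exact_mod_cast this
  have hbound := pow_le_factorial_mul_pow_mul_sum_card_commonLink hr hl hn hH hHcard
  rw [mul_pow, rpow_pow_eq_pow_mul_rpow hn₀ hl hr, pow_add] at hbound
  have htotal : t * (n : ℝ) ^ l ≤ l ! * total := by
    refine le_of_mul_le_mul_right ?_ (by positivity : (0 : ℝ) < (n : ℝ) ^ (r * (l - 1)))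
    linarith
  have hsum : ∑ _L ∈ powersetCard l (univ : Finset V), t ≤ total := by
    rw [sum_const, card_powersetCard, card_univ, nsmul_eq_mul]
    calc (n.choose l : ℝ) * t ≤ (n : ℝ) ^ l / l ! * t := by
          gcongr
          exact Nat.choose_le_pow_div l n
      _ ≤ total := by
          rw [div_mul_eq_mul_div, div_le_iff₀ (by positivity)]
          linarith
  have hne : (powersetCard l (univ : Finset V)).Nonempty := by
    rw [powersetCard_nonempty, card_univ]
    nlinarith
  exact exists_le_of_sum_le hne hsum

def ForcesCompletePartite (r l : ℕ) (T : ℕ → ℝ) : Prop :=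
  ∃ n₀ : ℕ, ∀ (V : Type) [Fintype V] [DecidableEq V], n₀ < Fintype.card V →
    ∀ H : Finset (Finset V), (∀ e ∈ H, #e = r) → T (Fintype.card V) ≤ #H →
      ContainsCompletePartite H r l

namespace ForcesCompletePartite

variable {r l : ℕ} {T T' : ℕ → ℝ}

lemma mono (h : ForcesCompletePartite r l T) (hT : ∀ n, T n ≤ T' n) :
    ForcesCompletePartite r l T' := by
  obtain ⟨n₀, h⟩ := h
  exact ⟨n₀, fun V _ _ hV H hH hHcard => h V hV H hH ((hT _).trans hHcard)⟩

lemma succ (hr : 1 ≤ r) (hl : 1 ≤ l)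
    (h : ForcesCompletePartite r l
      fun n => (3 / 2) ^ l * (n : ℝ) ^ ((r : ℝ) - 1 / (l : ℝ) ^ (r - 1))) :
    ForcesCompletePartite (r + 1) l fun n => (n : ℝ) ^ ((r : ℝ) + 1 - 1 / (l : ℝ) ^ r) := by
  obtain ⟨n₀, h⟩ := h
  refine ⟨max n₀ (4 * l ^ 2), fun V _ _ hV H hH hHcard => ?_⟩
  obtain ⟨L, hL, hlink⟩ :=
    exists_le_card_commonLink hr hl (le_max_right _ _ |>.trans hV.le) hH hHcard
  refine ContainsCompletePartite.of_commonLink (mem_powersetCard.mp hL).2 ?_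
  exact h V (le_max_left _ _ |>.trans_lt hV) _ (fun S hS => (mem_commonLink.mp hS).1) hlink

end ForcesCompletePartite

lemma forcesCompletePartite_one (l : ℕ) : ForcesCompletePartite 1 l fun _ => l :=
  ⟨0, fun _ _ _ _ _ hH hHcard => containsCompletePartite_one hH (Nat.cast_le.mp hHcard)⟩

theorem forcesCompletePartite {r l : ℕ} (hr : 2 ≤ r) (hl : 1 ≤ l) :
    ForcesCompletePartite r l fun n => (n : ℝ) ^ ((r : ℝ) - 1 / (l : ℝ) ^ (r - 1)) := by
  induction r, hr using Nat.le_induction with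
  | base =>
    have h := ((forcesCompletePartite_one l).mono fun n => ?_).succ le_rfl hl
    · norm_num at h ⊢
      exact h
    · simpa using natCast_le_three_halves_pow l
  | succ r hr ih =>
    have h := (ih.mono fun n => le_mul_of_one_le_left (Real.rpow_nonneg (Nat.cast_nonneg n) _)
      (one_le_pow₀ (by norm_num))).succ (by omega) hl
    push_cast
    simpa using h

end Hypergraph

/-- Erdős' theorem: for all `r ≥ 2` and `l ≥ 1` there is `n₀` such that every
`r`-graph on `n > n₀` vertices with at least `n^(r − 1/l^(r−1))` edges contains a
complete balanced `r`-partite `r`-graph `K^(r)(l)`. -/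
theorem stmt5 (r l : ℕ) (hr : 2 ≤ r) (hl : 1 ≤ l) :
    ∃ n₀ : ℕ, ∀ n : ℕ, n₀ < n →
    ∀ (V : Type) [Fintype V] [DecidableEq V], Fintype.card V = n →
    ∀ H : Finset (Finset V), (∀ e ∈ H, e.card = r) →
    (n : ℝ) ^ ((r : ℝ) - 1 / (l : ℝ) ^ (r - 1)) ≤ (H.card : ℝ) →
    ∃ f : Fin r → Finset V, (∀ i, (f i).card = l) ∧
      (Pairwise fun i j => Disjoint (f i) (f j)) ∧
      ∀ e : Finset V, e.card = r → (∀ i, (e ∩ f i).card = 1) → e ∈ H := by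
  obtain ⟨n₀, h⟩ := Hypergraph.forcesCompletePartite hr hl
  refine ⟨n₀, fun n hn V _ _ hV H hH hHcard => ?_⟩
  subst hV
  exact h V hn H hH hHcard
end

section
/- There exists η₀ > 0 such that for every η ∈ (0, η₀) there exists n₀ = n₀(η) with the following property: every 3-graph H on n > n₀ vertices with at least η·C(n,3) edges contains a K^(3)(t) with t = ⌊η·√(log₂ n)⌋, i.e., there exist pairwise disjoint t-element vertex sets V₁, V₂, V₃ such that every triple with one vertex in each Vᵢ is an edge of H. -/
/-!
Erdős' averaging argument, applied twice. A 3-graph of density `η` has `≳ η n²` pairs whose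
links have `≥ η n / 4` vertices; averaging over `t`-sets, some `t`-set `T` lies in the links
of a graph `G` of `c n²` such pairs, `c = (η/16)^(t+1)`. The same argument in `G` yields a
`2t`-set `S` and `(c/2)^(2t+1) n` vertices adjacent to all of `S`. Once this is `> 3t`, disjoint
`t`-sets can be chosen greedily inside `T`, `S` and those vertices, and they span a `K^(3)(t)`.
That happens when `n ≥ (1024/η)^((t+1)(2t+1))`, which for `t ≤ η √(log₂ n)` and `η ≤ 1/32`
holds as soon as `n ≥ (1024/η)^8`.
-/

open Finset
open scoped Nat

lemma exists_pairwise_disjoint_subsets {α : Type*} [DecidableEq α] {A B C : Finset α} {t : ℕ}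
    (hA : t ≤ #A) (hB : 2 * t ≤ #B) (hC : 3 * t ≤ #C) :
    ∃ A' ⊆ A, ∃ B' ⊆ B, ∃ C' ⊆ C, #A' = t ∧ #B' = t ∧ #C' = t ∧
      Disjoint A' B' ∧ Disjoint A' C' ∧ Disjoint B' C' := by
  obtain ⟨A', hA'A, hA'⟩ := exists_subset_card_eq hA
  obtain ⟨B', hB'B, hB'⟩ := exists_subset_card_eq (s := B \ A') (n := t) <| by
    have := le_card_sdiff A' B
    omega
  obtain ⟨C', hC'C, hC'⟩ := exists_subset_card_eq (s := C \ (A' ∪ B')) (n := t) <| by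
    have := le_card_sdiff (A' ∪ B') C
    have := card_union_le A' B'
    omega
  refine ⟨A', hA'A, B', hB'B.trans sdiff_subset, C', hC'C.trans sdiff_subset, hA', hB', hC',
    disjoint_sdiff.mono_right hB'B, ?_, ?_⟩
  · exact (disjoint_sdiff.mono_right hC'C).mono_left subset_union_left
  · exact (disjoint_sdiff.mono_right hC'C).mono_left subset_union_right

lemma sum_le_card_filter_le_mul_add {ι : Type*} (s : Finset ι) (g : ι → ℕ) {M a : ℕ}
    (hM : ∀ i ∈ s, g i ≤ M) :
    ∑ i ∈ s, g i ≤ #(s.filter fun i => a ≤ g i) * M + #s * a := by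
  rw [← sum_filter_add_sum_filter_not s (fun i => a ≤ g i)]
  gcongr
  · exact sum_le_card_nsmul _ _ _ fun i hi => hM i (mem_filter.mp hi).1
  · calc ∑ i ∈ s.filter (fun i => ¬a ≤ g i), g i
        ≤ #(s.filter fun i => ¬a ≤ g i) * a :=
          sum_le_card_nsmul _ _ _ fun i hi => (not_le.mp (mem_filter.mp hi).2).le
      _ ≤ #s * a := Nat.mul_le_mul_right a (card_filter_le _ _)

lemma cube_div_twelve_le_choose_three {n : ℕ} (hn : 10 ≤ n) : (n : ℝ) ^ 3 / 12 ≤ n.choose 3 := by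
  refine le_trans ?_ (Nat.pow_le_choose (α := ℝ) 3 n)
  have hn' : (10 : ℝ) ≤ n := by exact_mod_cast hn
  rw [Nat.cast_sub (by omega)]
  push_cast
  norm_num [Nat.factorial]
  have h := sub_nonneg.mpr hn'
  nlinarith [mul_nonneg (mul_nonneg h h) h, mul_nonneg h h]

section Hypergraph

variable {V : Type*} [Fintype V] [DecidableEq V]

def link (G : Finset (Finset V)) (p : Finset V) : Finset V :=
  univ.filter fun z => z ∉ p ∧ insert z p ∈ G

@[simp]
lemma mem_link {G : Finset (Finset V)} {p : Finset V} {z : V} :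
    z ∈ link G p ↔ z ∉ p ∧ insert z p ∈ G := by
  simp [link]

lemma sum_card_link {r : ℕ} {G : Finset (Finset V)} (hG : ∀ e ∈ G, #e = r + 1) :
    ∑ p ∈ univ.powersetCard r, #(link G p) = (r + 1) * #G := by
  have hfiber : ∀ z : V, #((univ.powersetCard r).filter fun p => z ∈ link G p) =
      #(G.filter fun e => z ∈ e) := by
    intro z
    refine card_bij' (fun p _ => insert z p) (fun e _ => e.erase z) ?_ ?_ ?_ ?_
    · intro p hp
      simp only [mem_filter, mem_link] at hp
      simp [hp.2.2]
    · intro e he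
      simp only [mem_filter] at he
      simp only [mem_filter, mem_powersetCard, mem_link, insert_erase he.2]
      refine ⟨⟨subset_univ _, ?_⟩, notMem_erase _ _, he.1⟩
      rw [card_erase_of_mem he.2, hG e he.1, Nat.add_sub_cancel]
    · intro p hp
      simp only [mem_filter, mem_link] at hp
      exact erase_insert hp.2.1
    · intro e he
      exact insert_erase (mem_filter.mp he).2
  calc ∑ p ∈ univ.powersetCard r, #(link G p)
      = ∑ z : V, #((univ.powersetCard r).filter fun p => z ∈ link G p) := by
        simp_rw [card_eq_sum_ones, sum_filter]; rw [sum_comm]; simp [link]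
    _ = ∑ e ∈ G, #e := by
        simp_rw [hfiber, card_eq_sum_ones, sum_filter]; rw [sum_comm]; simp
    _ = (r + 1) * #G := by
        rw [sum_congr rfl hG, sum_const, smul_eq_mul, mul_comm]

lemma le_card_filter_le_card_link {r : ℕ} {G : Finset (Finset V)} (hG : ∀ e ∈ G, #e = r + 1)
    {δ : ℝ} (hδ : 4 ≤ δ * Fintype.card V)
    (hGcard : δ * (Fintype.card V : ℝ) ^ (r + 1) / (r + 1)! ≤ #G) :
    δ * (Fintype.card V : ℝ) ^ r / (4 * r !) ≤
      #((univ.powersetCard r).filter fun p => ⌈δ * Fintype.card V / 2⌉₊ ≤ #(link G p)) := by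
  set n : ℝ := (Fintype.card V : ℝ)
  set a := ⌈δ * n / 2⌉₊
  set B := (univ.powersetCard r).filter fun p => a ≤ #(link G p)
  have hcount : ((r + 1) * #G : ℝ) ≤ #B * n + (Fintype.card V).choose r * a := by
    have h := sum_le_card_filter_le_mul_add (univ.powersetCard r) (fun p => #(link G p))
      (a := a) fun p _ => card_le_univ (link G p)
    rw [sum_card_link hG, card_powersetCard, card_univ] at h
    have h' : (((r + 1) * #G : ℕ) : ℝ) ≤
        ((#B * Fintype.card V + (Fintype.card V).choose r * a : ℕ) : ℝ) := by
      exact_mod_cast h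
    push_cast at h'
    exact h'
  have hn : 0 < n := by
    refine lt_of_le_of_ne (Nat.cast_nonneg _) fun h => ?_
    rw [← h, mul_zero] at hδ
    norm_num at hδ
  have hδ0 : 0 < δ := pos_of_mul_pos_left (by linarith) hn.le
  have hF : (0 : ℝ) < (r ! : ℝ) := by positivity
  have hchoose : ((Fintype.card V).choose r : ℝ) ≤ n ^ r / (r ! : ℝ) := Nat.choose_le_pow_div r _
  have ha : (a : ℝ) ≤ 3 * (δ * n) / 4 := by
    linarith [Nat.ceil_lt_add_one (show 0 ≤ δ * n / 2 by positivity)]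
  have hG' : δ * n ^ (r + 1) / (r ! : ℝ) ≤ (r + 1) * #G := by
    calc δ * n ^ (r + 1) / (r ! : ℝ) = (r + 1) * (δ * n ^ (r + 1) / ((r + 1)! : ℝ)) := by
          rw [Nat.factorial_succ]; push_cast; field_simp
      _ ≤ (r + 1) * #G := by gcongr
  have : δ * n ^ r / (4 * (r ! : ℝ)) * n ≤ #B * n := by
    have h1 : ((Fintype.card V).choose r : ℝ) * a ≤ n ^ r / (r ! : ℝ) * (3 * (δ * n) / 4) :=
      mul_le_mul hchoose ha (Nat.cast_nonneg _) (by positivity)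
    have h2 : δ * n ^ r / (4 * (r ! : ℝ)) * n =
        δ * n ^ (r + 1) / (r ! : ℝ) - n ^ r / (r ! : ℝ) * (3 * (δ * n) / 4) := by
      field_simp; ring
    linarith
  exact le_of_mul_le_mul_right this hn

lemma exists_card_eq_mul_choose_le {ι : Type*} (P : Finset ι) (f : ι → Finset V) {t D : ℕ}
    (hD : ∀ i ∈ P, D ≤ #(f i)) (ht : t ≤ Fintype.card V) :
    ∃ T : Finset V, #T = t ∧
      #P * D.choose t ≤ (Fintype.card V).choose t * #(P.filter fun i => T ⊆ f i) := by
  set s := (univ : Finset V).powersetCard t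
  have hs : s.Nonempty := powersetCard_nonempty.mpr (by simpa using ht)
  have hdouble : ∑ i ∈ P, (#(f i)).choose t = ∑ T ∈ s, #(P.filter fun i => T ⊆ f i) := by
    refine Eq.trans ?_
      (sum_card_bipartiteAbove_eq_sum_card_bipartiteBelow (r := fun i T => T ⊆ f i))
    refine sum_congr rfl fun i _ => ?_
    rw [← card_powersetCard]
    congr 1
    ext T
    simp [bipartiteAbove, s, mem_powersetCard, and_comm]
  obtain ⟨T, hT, hle⟩ := exists_le_of_sum_le hs (f := fun _ => #P * D.choose t)
    (g := fun T => #s * #(P.filter fun i => T ⊆ f i)) <| by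
    calc ∑ _T ∈ s, #P * D.choose t = #s * ∑ _i ∈ P, D.choose t := by simp
      _ ≤ #s * ∑ i ∈ P, (#(f i)).choose t := by gcongr with i hi; exact hD i hi
      _ = ∑ T ∈ s, #s * #(P.filter fun i => T ⊆ f i) := by rw [hdouble, mul_sum]
  refine ⟨T, (mem_powersetCard.mp hT).2, ?_⟩
  simpa [s, card_powersetCard] using hle

lemma exists_card_eq_mul_pow_le {ι : Type*} (P : Finset ι) (f : ι → Finset V) {t D : ℕ}
    (hD : ∀ i ∈ P, D ≤ #(f i)) (ht : t ≤ Fintype.card V) (htD : 2 * t ≤ D) :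
    ∃ T : Finset V, #T = t ∧
      (#P : ℝ) * (D / 2) ^ t ≤ (Fintype.card V : ℝ) ^ t * #(P.filter fun i => T ⊆ f i) := by
  obtain ⟨T, hT, hle⟩ := exists_card_eq_mul_choose_le P f hD ht
  refine ⟨T, hT, ?_⟩
  have hF : (0 : ℝ) < (t ! : ℝ) := by positivity
  have hlower : ((D : ℝ) / 2) ^ t / (t ! : ℝ) ≤ D.choose t := by
    refine le_trans ?_ (Nat.pow_le_choose t D)
    gcongr
    rw [Nat.cast_sub (by omega)]
    have : (2 * t : ℝ) ≤ D := by exact_mod_cast htD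
    push_cast
    linarith
  have hupper : ((Fintype.card V).choose t : ℝ) ≤ (Fintype.card V : ℝ) ^ t / (t ! : ℝ) :=
    Nat.choose_le_pow_div t _
  have hle' : (#P : ℝ) * D.choose t ≤ (Fintype.card V).choose t * #(P.filter fun i => T ⊆ f i) := by
    exact_mod_cast hle
  have key : (#P : ℝ) * (D / 2) ^ t / (t ! : ℝ) ≤
      (Fintype.card V : ℝ) ^ t * #(P.filter fun i => T ⊆ f i) / (t ! : ℝ) := by
    calc (#P : ℝ) * (D / 2) ^ t / (t ! : ℝ) = #P * ((D / 2) ^ t / (t ! : ℝ)) := by ring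
      _ ≤ #P * D.choose t := by gcongr
      _ ≤ (Fintype.card V).choose t * #(P.filter fun i => T ⊆ f i) := hle'
      _ ≤ (Fintype.card V : ℝ) ^ t / (t ! : ℝ) * #(P.filter fun i => T ⊆ f i) := by gcongr
      _ = _ := by ring
  exact le_of_mul_le_mul_right (by simpa [div_eq_mul_inv] using key) (inv_pos.mpr hF)

lemma card_le_card_filter_singleton_mem {P : Finset (Finset V)}
    (hP : P ⊆ (univ : Finset V).powersetCard 1) : #P ≤ #(univ.filter fun z => {z} ∈ P) := by
  calc #P ≤ #((univ.filter fun z => {z} ∈ P).map ⟨_, singleton_injective⟩) := by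
        refine card_le_card fun p hp => ?_
        obtain ⟨z, rfl⟩ := card_eq_one.mp (mem_powersetCard.mp (hP hp)).2
        simpa using hp
    _ = _ := card_map _

lemma exists_forall_pair_mem_of_le_card {G : Finset (Finset V)} (hG : ∀ e ∈ G, #e = 2)
    {c : ℝ} {s : ℕ} (hGcard : c * (Fintype.card V : ℝ) ^ 2 ≤ #G)
    (hcn : 2 * s + 2 ≤ c * Fintype.card V) (hs : s ≤ Fintype.card V) :
    ∃ S W : Finset V, #S = s ∧ (c / 2) ^ (s + 1) * Fintype.card V ≤ #W ∧
      ∀ y ∈ S, ∀ z ∈ W, {y, z} ∈ G := by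
  have hrich := le_card_filter_le_card_link (r := 1) hG (δ := 2 * c) (by linarith)
    (by norm_num [Nat.factorial]; linarith)
  set n : ℝ := (Fintype.card V : ℝ)
  have hn : 0 < n := by
    refine lt_of_le_of_ne (Nat.cast_nonneg _) fun h => ?_
    rw [← h, mul_zero] at hcn
    linarith
  have hc : 0 < c := pos_of_mul_pos_left (by linarith) hn.le
  set b := ⌈2 * c * n / 2⌉₊
  set B := (univ.powersetCard 1).filter fun p => b ≤ #(link G p)
  have hB : c * n / 2 ≤ #B := by
    norm_num at hrich
    linarith
  have hb : c * n ≤ b := by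
    have := Nat.le_ceil (2 * c * n / 2)
    linarith
  have hsb : 2 * s ≤ b := by
    have : (2 * s : ℝ) ≤ b := by linarith
    exact_mod_cast this
  obtain ⟨S, hS, hcount⟩ := exists_card_eq_mul_pow_le B (link G) (t := s) (D := b)
    (fun p hp => (mem_filter.mp hp).2) hs hsb
  set W' := B.filter fun p => S ⊆ link G p
  have hW' : (c / 2) ^ (s + 1) * n ≤ #W' := by
    refine le_of_mul_le_mul_left ?_ (pow_pos hn s)
    calc n ^ s * ((c / 2) ^ (s + 1) * n) = c * n / 2 * (c * n / 2) ^ s := by ring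
      _ ≤ #B * (b / 2) ^ s := by gcongr
      _ ≤ n ^ s * #W' := hcount
  have hW'W : #W' ≤ #(univ.filter fun z => {z} ∈ W') :=
    card_le_card_filter_singleton_mem ((filter_subset _ _).trans (filter_subset _ _))
  refine ⟨S, univ.filter fun z => {z} ∈ W', hS, hW'.trans (by exact_mod_cast hW'W), ?_⟩
  intro y hy z hz
  have hz' : {z} ∈ W' := (mem_filter.mp hz).2
  exact (mem_link.mp ((mem_filter.mp hz').2 hy)).2

lemma exists_common_link_graph {H : Finset (Finset V)} (hH : ∀ e ∈ H, #e = 3) {η : ℝ}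
    (hη : η ≤ 1) (hE : η * (Fintype.card V).choose 3 ≤ #H) {t : ℕ}
    (hn : 8 * t + 16 ≤ η * Fintype.card V) :
    ∃ (T : Finset V) (G : Finset (Finset V)), #T = t ∧
      (η / 16) ^ (t + 1) * (Fintype.card V : ℝ) ^ 2 ≤ #G ∧
      ∀ e ∈ G, #e = 2 ∧ ∀ x ∈ T, insert x e ∈ H := by
  have hnη : η * Fintype.card V ≤ Fintype.card V :=
    mul_le_of_le_one_left (Nat.cast_nonneg _) hη
  have hn10 : 10 ≤ Fintype.card V := by
    have : (10 : ℝ) ≤ Fintype.card V := by linarith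
    exact_mod_cast this
  have htn : t ≤ Fintype.card V := by
    have : (t : ℝ) ≤ Fintype.card V := by linarith
    exact_mod_cast this
  have hη0 : 0 < η := pos_of_mul_pos_left (by linarith) (Nat.cast_nonneg _)
  have hrich := le_card_filter_le_card_link (r := 2) hH (δ := η / 2) (by linarith) <| by
    have := mul_le_mul_of_nonneg_left (cube_div_twelve_le_choose_three hn10) hη0.le
    norm_num [Nat.factorial]
    linarith
  set n : ℝ := (Fintype.card V : ℝ)
  set a := ⌈η / 2 * n / 2⌉₊
  set B := (univ.powersetCard 2).filter fun p => a ≤ #(link H p)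
  have hB : η * n ^ 2 / 16 ≤ #B := by
    norm_num [Nat.factorial] at hrich
    linarith
  have ha : η * n / 4 ≤ a := by
    have := Nat.le_ceil (η / 2 * n / 2)
    linarith
  have hta : 2 * t ≤ a := by
    have : (2 * t : ℝ) ≤ a := by linarith
    exact_mod_cast this
  obtain ⟨T, hT, hcount⟩ := exists_card_eq_mul_pow_le B (link H) (t := t) (D := a)
    (fun p hp => (mem_filter.mp hp).2) htn hta
  refine ⟨T, B.filter fun p => T ⊆ link H p, hT, ?_, fun e he => ?_⟩
  · refine le_of_mul_le_mul_left ?_ (pow_pos (by linarith : 0 < n) t)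
    calc n ^ t * ((η / 16) ^ (t + 1) * n ^ 2) = η * n ^ 2 / 16 * (η * n / 16) ^ t := by ring
      _ ≤ (#B : ℝ) * ((a : ℝ) / 2) ^ t :=
          mul_le_mul hB (pow_le_pow_left₀ (by positivity) (by linarith) t) (by positivity)
            (Nat.cast_nonneg _)
      _ ≤ _ := hcount
  · obtain ⟨heB, hTe⟩ := mem_filter.mp he
    exact ⟨(mem_powersetCard.mp (mem_filter.mp heB).1).2,
      fun x hx => (mem_link.mp (hTe hx)).2⟩

theorem exists_complete_tripartite_of_le_card {H : Finset (Finset V)} (hH : ∀ e ∈ H, #e = 3)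
    {η : ℝ} (hη0 : 0 < η) (hη : η ≤ 1) (hE : η * (Fintype.card V).choose 3 ≤ #H) {t : ℕ}
    (hn : 3 * t + 1 ≤ ((η / 16) ^ (t + 1) / 2) ^ (2 * t + 1) * Fintype.card V) :
    ∃ V₁ V₂ V₃ : Finset V, #V₁ = t ∧ #V₂ = t ∧ #V₃ = t ∧
      Disjoint V₁ V₂ ∧ Disjoint V₁ V₃ ∧ Disjoint V₂ V₃ ∧
      ∀ x ∈ V₁, ∀ y ∈ V₂, ∀ z ∈ V₃, ({x, y, z} : Finset V) ∈ H := by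
  set c := (η / 16) ^ (t + 1)
  have hc0 : 0 < c := by positivity
  have hcη : c ≤ η / 16 := pow_le_of_le_one (by positivity) (by linarith) (by omega)
  have hcn : 6 * t + 2 ≤ c * Fintype.card V := by
    have : (c / 2) ^ (2 * t + 1) ≤ c / 2 :=
      pow_le_of_le_one (by positivity) (by linarith) (by omega)
    nlinarith [(Nat.cast_nonneg _ : (0 : ℝ) ≤ Fintype.card V)]
  obtain ⟨T, G, hT, hG, hGH⟩ := exists_common_link_graph hH hη hE (t := t)
    (by nlinarith [(Nat.cast_nonneg _ : (0 : ℝ) ≤ Fintype.card V)])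
  obtain ⟨S, W, hS, hW, hSW⟩ := exists_forall_pair_mem_of_le_card (fun e he => (hGH e he).1) hG
    (s := 2 * t) (by push_cast; linarith) <| by
      have : (2 * t : ℝ) ≤ Fintype.card V := by
        nlinarith [(Nat.cast_nonneg _ : (0 : ℝ) ≤ Fintype.card V)]
      exact_mod_cast this
  have hWt : 3 * t ≤ #W := by
    have : (3 * t : ℝ) ≤ #W := by linarith
    exact_mod_cast this
  obtain ⟨V₁, h₁, V₂, h₂, V₃, h₃, hV₁, hV₂, hV₃, h₁₂, h₁₃, h₂₃⟩ :=
    exists_pairwise_disjoint_subsets hT.ge hS.ge hWt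
  exact ⟨V₁, V₂, V₃, hV₁, hV₂, hV₃, h₁₂, h₁₃, h₂₃,
    fun x hx y hy z hz => (hGH _ (hSW y (h₂ hy) z (h₃ hz))).2 x (h₁ hx)⟩

end Hypergraph

lemma three_mul_add_one_le_of_pow_le {η : ℝ} (hη : 0 < η) {t : ℕ} {x : ℝ}
    (hx : (1024 / η) ^ ((t + 1) * (2 * t + 1)) ≤ x) :
    3 * t + 1 ≤ ((η / 16) ^ (t + 1) / 2) ^ (2 * t + 1) * x := by
  have hbase : (η / 32) ^ (t + 1) ≤ (η / 16) ^ (t + 1) / 2 := by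
    have : (η / 16) ^ (t + 1) / 2 = 2 ^ t * (η / 32) ^ (t + 1) := by
      rw [show η / 16 = 2 * (η / 32) by ring, mul_pow, pow_succ]; ring
    rw [this]
    exact le_mul_of_one_le_left (by positivity) (one_le_pow₀ (by norm_num))
  have hsmall : (3 * t + 1 : ℝ) ≤ 32 ^ ((t + 1) * (2 * t + 1)) := by
    calc (3 * t + 1 : ℝ) ≤ (1 + 3) ^ t := by
          simpa [add_comm, mul_comm] using one_add_mul_le_pow (a := (3 : ℝ)) (by norm_num) t
      _ ≤ 32 ^ ((t + 1) * (2 * t + 1)) :=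
          (pow_le_pow_left₀ (by norm_num) (by norm_num) t).trans
            (pow_le_pow_right₀ (by norm_num) (by nlinarith))
  calc (3 * t + 1 : ℝ) ≤ 32 ^ ((t + 1) * (2 * t + 1)) := hsmall
    _ = (η / 32) ^ ((t + 1) * (2 * t + 1)) * (1024 / η) ^ ((t + 1) * (2 * t + 1)) := by
        rw [← mul_pow]; congr 1; field_simp; norm_num
    _ ≤ ((η / 16) ^ (t + 1) / 2) ^ (2 * t + 1) * x := by
        rw [pow_mul]
        gcongr

lemma pow_le_of_le_mul_sqrt_logb {η : ℝ} (hη0 : 0 < η) (hη : η ≤ 1 / 32) {x : ℝ}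
    (hx : (1024 / η) ^ 8 ≤ x) {t : ℕ} (ht : (t : ℝ) ≤ η * √(Real.logb 2 x)) :
    (1024 / η) ^ ((t + 1) * (2 * t + 1)) ≤ x := by
  set Λ := Real.log (1024 / η)
  have hbase : 1 ≤ 1024 / η := by rw [le_div_iff₀ hη0]; linarith
  have hx0 : 0 < x := lt_of_lt_of_le (by positivity) hx
  have hΛ0 : 0 ≤ Λ := Real.log_nonneg hbase
  have hΛ : Λ ≤ 7 + 1 / η := by
    have h1024 : Real.log 1024 = 10 * Real.log 2 := by
      rw [show (1024 : ℝ) = 2 ^ 10 by norm_num, Real.log_pow]; norm_num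
    have := Real.one_sub_inv_le_log_of_pos hη0
    have := Real.log_two_lt_d9
    rw [show Λ = Real.log 1024 - Real.log η from Real.log_div (by norm_num) hη0.ne', h1024,
      one_div]
    linarith
  have hlogx : 8 * Λ ≤ Real.log x := by
    rw [← Real.log_le_log_iff (by positivity) hx0, Real.log_pow] at hx
    exact_mod_cast hx
  set L := Real.logb 2 x
  have hL : L * Real.log 2 = Real.log x := by
    rw [show L = Real.log x / Real.log 2 from Real.log_div_log.symm,
      div_mul_cancel₀ _ (Real.log_pos one_lt_two).ne']
  have hL0 : 0 ≤ L := Real.logb_nonneg one_lt_two (by nlinarith [one_le_pow₀ (n := 8) hbase])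
  have ht2 : (t : ℝ) ^ 2 ≤ η ^ 2 * L := by
    calc (t : ℝ) ^ 2 ≤ (η * √L) ^ 2 := pow_le_pow_left₀ (Nat.cast_nonneg _) ht 2
      _ = η ^ 2 * L := by rw [mul_pow, Real.sq_sqrt hL0]
  have hηΛ : 4 * η ^ 2 * Λ ≤ Real.log 2 / 2 := by
    have := Real.log_two_gt_d9
    have h1 : η ^ 2 * Λ ≤ η ^ 2 * (7 + 1 / η) := mul_le_mul_of_nonneg_left hΛ (by positivity)
    have h2 : η ^ 2 * (7 + 1 / η) = 7 * η ^ 2 + η := by field_simp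
    nlinarith
  have key : (((t + 1) * (2 * t + 1) : ℕ) : ℝ) * Λ ≤ Real.log x := by
    have hE : (((t + 1) * (2 * t + 1) : ℕ) : ℝ) ≤ 4 * η ^ 2 * L + 4 := by
      push_cast
      nlinarith [sq_nonneg ((t : ℝ) - 1)]
    calc (((t + 1) * (2 * t + 1) : ℕ) : ℝ) * Λ ≤ (4 * η ^ 2 * L + 4) * Λ := by gcongr
      _ = (4 * η ^ 2 * Λ) * L + 4 * Λ := by ring
      _ ≤ Real.log 2 / 2 * L + Real.log x / 2 := by gcongr; linarith
      _ = Real.log x := by linarith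
  rw [← Real.log_le_log_iff (by positivity) hx0, Real.log_pow]
  exact key

/-- For small `η > 0` and `n` large, every 3-graph on `n` vertices with at least
`η·C(n,3)` edges contains a `K^(3)(t)` with `t = ⌊η·√(log₂ n)⌋`. -/
theorem stmt6 :
    ∃ η₀ : ℝ, 0 < η₀ ∧ ∀ η : ℝ, 0 < η → η < η₀ →
    ∃ n₀ : ℕ, ∀ n : ℕ, n₀ < n →
    ∀ (V : Type) [Fintype V] [DecidableEq V], Fintype.card V = n →
    ∀ H : Finset (Finset V), (∀ e ∈ H, e.card = 3) →
    η * (n.choose 3 : ℝ) ≤ (H.card : ℝ) →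
    ∃ V₁ V₂ V₃ : Finset V,
      V₁.card = ⌊η * Real.sqrt (Real.logb 2 n)⌋₊ ∧
      V₂.card = ⌊η * Real.sqrt (Real.logb 2 n)⌋₊ ∧
      V₃.card = ⌊η * Real.sqrt (Real.logb 2 n)⌋₊ ∧
      Disjoint V₁ V₂ ∧ Disjoint V₁ V₃ ∧ Disjoint V₂ V₃ ∧
      ∀ x ∈ V₁, ∀ y ∈ V₂, ∀ z ∈ V₃, ({x, y, z} : Finset V) ∈ H := by
  refine ⟨1 / 32, by norm_num, fun η hη0 hη => ⟨⌈(1024 / η) ^ 8⌉₊,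
    fun n hn V _ _ hV H hH hE => ?_⟩⟩
  subst hV
  have hlarge : (1024 / η) ^ 8 ≤ (Fintype.card V : ℝ) := (Nat.lt_of_ceil_lt hn).le
  exact exists_complete_tripartite_of_le_card hH hη0 (by linarith) hE
    (three_mul_add_one_le_of_pow_le hη0
      (pow_le_of_le_mul_sqrt_logb hη0 hη.le hlarge (Nat.floor_le (by positivity))))
end

section
/- For all constants c₁, c₂, η ∈ (0,1) there exists m₀ such that for every integer m ≥ m₀ the following holds: let X, Y, Z be pairwise disjoint finite sets with |X| = |Y| = ⌊c₁·m⌋ and |Z| ≥ c₂·2^(m²), and let H be a 3-graph on X ∪ Y ∪ Z such that the number of edges {x,y,z} with x ∈ X, y ∈ Y, z ∈ Z is at least η·|X|·|Y|·|Z|. Then there exist X′ ⊆ X, Y′ ⊆ Y, Z′ ⊆ Z with |X′| = |Y′| = |Z′| ≥ (η/4)·log₂|X| such that every triple {x,y,z} with x ∈ X′, y ∈ Y′, z ∈ Z′ is an edge of H. -/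
/-!
Averaging over `z ∈ Z`, at least `η|Z|/2` vertices `z` have a link graph `L z ⊆ X × Y` of
density at least `η/2`. There are only `2^(|X||Y|) ≤ 2^(n²)` possible link graphs, where
`n = ⌊c₁m⌋ < m`, while `|Z| ≥ c₂ 2^(m²)`; so by pigeonhole a single dense bipartite graph `G`
is the link of `s = ⌈(η/4) log₂ n⌉` vertices of `Z`. In `G`, a Kővári–Sós–Turán count of
the pairs `(S, y)` with `S` an `s`-subset of the neighbourhood of `y` gives `s`-sets `S ⊆ X`,
`T ⊆ Y` with `S × T ⊆ G`; this needs `s (8/η)^s = o(n)`, which holds because `s` is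
logarithmic in `n`.
-/

open Finset Filter Real Asymptotics

lemma Nat.choose_mul_pow_le_choose_mul_pow (n d s : ℕ) :
    n.choose s * (d + 1 - s) ^ s ≤ d.choose s * n ^ s := by
  refine Nat.le_of_mul_le_mul_right ?_ s.factorial_pos
  calc n.choose s * (d + 1 - s) ^ s * s.factorial
      = n.descFactorial s * (d + 1 - s) ^ s := by
        rw [Nat.descFactorial_eq_factorial_mul_choose]; ring
    _ ≤ n ^ s * d.descFactorial s :=
        Nat.mul_le_mul (n.descFactorial_le_pow s) (d.pow_sub_le_descFactorial s)
    _ = d.choose s * n ^ s * s.factorial := by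
        rw [Nat.descFactorial_eq_factorial_mul_choose]; ring

lemma Nat.mul_choose_le_mul_choose {n d s g : ℕ} (hsd : s ≤ d)
    (h : s * n ^ s ≤ g * (d + 1 - s) ^ s) : s * n.choose s ≤ g * d.choose s := by
  have hpos : 0 < (d + 1 - s) ^ s := pow_pos (by omega) s
  refine Nat.le_of_mul_le_mul_right ?_ hpos
  calc s * n.choose s * (d + 1 - s) ^ s ≤ s * (d.choose s * n ^ s) := by
        rw [mul_assoc]; exact Nat.mul_le_mul_left s (n.choose_mul_pow_le_choose_mul_pow d s)
    _ = d.choose s * (s * n ^ s) := by ring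
    _ ≤ d.choose s * (g * (d + 1 - s) ^ s) := Nat.mul_le_mul_left _ h
    _ = g * d.choose s * (d + 1 - s) ^ s := by ring

namespace Finset

variable {ι α β γ : Type*}

lemma sum_le_card_filter_mul_add_card_mul {s : Finset ι} {f : ι → ℝ} {M t : ℝ}
    (hM : ∀ i ∈ s, f i ≤ M) (ht : 0 ≤ t) :
    ∑ i ∈ s, f i ≤ #{i ∈ s | t ≤ f i} * M + #s * t := by
  rw [← sum_filter_add_sum_filter_not s (fun i => t ≤ f i)]
  have hlarge := sum_le_card_nsmul {i ∈ s | t ≤ f i} f M fun i hi => hM i (mem_filter.1 hi).1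
  have hsmall := sum_le_card_nsmul {i ∈ s | ¬t ≤ f i} f t fun i hi =>
    (not_le.1 (mem_filter.1 hi).2).le
  have hcard : (#{i ∈ s | ¬t ≤ f i} : ℝ) ≤ #s := by exact_mod_cast card_filter_le _ _
  rw [nsmul_eq_mul] at hlarge hsmall
  nlinarith

lemma half_mul_card_le_card_filter_of_mul_card_le_sum {s : Finset ι} {f : ι → ℝ}
    {M δ : ℝ} (hM₀ : 0 < M) (hδ : 0 ≤ δ) (hM : ∀ i ∈ s, f i ≤ M)
    (hsum : δ * M * #s ≤ ∑ i ∈ s, f i) :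
    δ / 2 * #s ≤ #{i ∈ s | δ / 2 * M ≤ f i} := by
  have := sum_le_card_filter_mul_add_card_mul hM (by positivity : 0 ≤ δ / 2 * M)
  nlinarith

lemma exists_card_eq_le_card_filter_subset_of_mul_choose_le_sum [DecidableEq α]
    {X : Finset α} {Y : Finset β} {N : β → Finset α} (hN : ∀ y ∈ Y, N y ⊆ X) {s k : ℕ}
    (hs : s ≤ #X) (h : k * (#X).choose s ≤ ∑ y ∈ Y, (#(N y)).choose s) :
    ∃ S ⊆ X, #S = s ∧ k ≤ #{y ∈ Y | S ⊆ N y} := by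
  have hcount : ∑ S ∈ X.powersetCard s, #{y ∈ Y | S ⊆ N y} =
      ∑ y ∈ Y, (#(N y)).choose s := by
    refine (sum_card_bipartiteAbove_eq_sum_card_bipartiteBelow (fun S y => S ⊆ N y)).trans
      (sum_congr rfl fun y hy => ?_)
    rw [← card_powersetCard]
    congr 1
    ext S
    simp only [bipartiteBelow, mem_filter, mem_powersetCard]
    exact ⟨fun ⟨⟨_, hS⟩, hSN⟩ => ⟨hSN, hS⟩,
      fun ⟨hSN, hS⟩ => ⟨⟨hSN.trans (hN y hy), hS⟩, hSN⟩⟩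
  obtain ⟨S, hS, hkS⟩ := exists_le_of_sum_le (powersetCard_nonempty.2 hs)
    (f := fun _ => k) (g := fun S => #{y ∈ Y | S ⊆ N y})
    (by rw [sum_const, card_powersetCard, smul_eq_mul, hcount, mul_comm]; exact h)
  exact ⟨S, (mem_powersetCard.1 hS).1, (mem_powersetCard.1 hS).2, hkS⟩

lemma card_filter_product_eq_sum {s : Finset α} {t : Finset β} (P : α × β → Prop)
    [DecidablePred P] : #{p ∈ s ×ˢ t | P p} = ∑ b ∈ t, #{a ∈ s | P (a, b)} := by
  simp only [card_filter, sum_product_right]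

theorem exists_prod_subset_of_mul_card_le_card [DecidableEq α] [DecidableEq β]
    {X : Finset α} {Y : Finset β} {G : Finset (α × β)} (hG : G ⊆ X ×ˢ Y) {δ : ℝ}
    (hδ : 0 < δ) (hδ₁ : δ ≤ 1) (hGcard : δ * #X * #Y ≤ #G) {s : ℕ} (hsX : s ≤ δ / 4 * #X)
    (hsY : s * (4 / δ) ^ s ≤ δ / 2 * #Y) :
    ∃ S ⊆ X, ∃ T ⊆ Y, #S = s ∧ #T = s ∧ S ×ˢ T ⊆ G := by
  obtain rfl | hs := s.eq_zero_or_pos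
  · exact ⟨∅, empty_subset _, ∅, empty_subset _, rfl, rfl, by simp⟩
  have hs₁ : (1 : ℝ) ≤ s := by exact_mod_cast hs
  have hX : (0 : ℝ) < #X := by nlinarith
  set N : β → Finset α := fun y => {x ∈ X | (x, y) ∈ G}
  have hdeg : #G = ∑ y ∈ Y, #(N y) :=
    calc #G = #{p ∈ X ×ˢ Y | p ∈ G} := by rw [filter_mem_eq_inter, inter_eq_right.2 hG]
      _ = ∑ y ∈ Y, #(N y) := card_filter_product_eq_sum _
  set good := {y ∈ Y | δ / 2 * #X ≤ (#(N y) : ℝ)}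
  have hgood : δ / 2 * #Y ≤ #good :=
    half_mul_card_le_card_filter_of_mul_card_le_sum hX hδ.le
      (fun y _ => by exact_mod_cast card_filter_le _ _)
      (by exact_mod_cast hdeg ▸ hGcard)
  set D := ⌈δ / 2 * #X⌉₊
  have hD : δ / 2 * #X ≤ D := Nat.le_ceil _
  have hsD : s ≤ D := by exact_mod_cast (show (s : ℝ) ≤ D by linarith)
  have hDs : δ / 4 * #X ≤ ((D + 1 - s : ℕ) : ℝ) := by
    rw [Nat.cast_sub (by omega)]; push_cast; linarith
  have hpow : (s : ℝ) * #X ^ s ≤ #good * ((D + 1 - s : ℕ) : ℝ) ^ s := by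
    have h4 : (4 / δ) ^ s * (δ / 4) ^ s = 1 := by
      rw [← mul_pow, div_mul_div_comm, mul_comm 4 δ, div_self (by positivity), one_pow]
    calc (s : ℝ) * #X ^ s = s * (4 / δ) ^ s * (δ / 4 * #X) ^ s := by
          rw [mul_pow, ← mul_assoc, mul_assoc (s : ℝ), h4, mul_one]
      _ ≤ #good * ((D + 1 - s : ℕ) : ℝ) ^ s := by
          gcongr
          exact hsY.trans hgood
  have hcount : s * (#X).choose s ≤ ∑ y ∈ Y, (#(N y)).choose s :=
    calc s * (#X).choose s ≤ #good * D.choose s :=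
          Nat.mul_choose_le_mul_choose hsD (by exact_mod_cast hpow)
      _ ≤ ∑ y ∈ good, (#(N y)).choose s := by
          rw [← smul_eq_mul]
          exact card_nsmul_le_sum _ _ _ fun y hy =>
            Nat.choose_le_choose s (Nat.ceil_le.2 (mem_filter.1 hy).2)
      _ ≤ ∑ y ∈ Y, (#(N y)).choose s := sum_le_sum_of_subset (filter_subset _ _)
  obtain ⟨S, hSX, hS, hsS⟩ := exists_card_eq_le_card_filter_subset_of_mul_choose_le_sum
    (fun y _ => filter_subset _ _) (by exact_mod_cast (show (s : ℝ) ≤ #X by nlinarith)) hcount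
  obtain ⟨T, hT, hTs⟩ := exists_subset_card_eq hsS
  refine ⟨S, hSX, T, hT.trans (filter_subset _ _), hS, hTs, ?_⟩
  rintro ⟨x, y⟩ hxy
  rw [mem_product] at hxy
  exact (mem_filter.1 ((mem_filter.1 (hT hxy.2)).2 hxy.1)).2

theorem exists_dense_le_card_fiber [DecidableEq α] {Z : Finset γ}
    {A : Finset α} {L : γ → Finset α} (hL : ∀ z ∈ Z, L z ⊆ A) (hA : A.Nonempty) {δ : ℝ}
    (hδ : 0 ≤ δ) (hsum : δ * #A * #Z ≤ ∑ z ∈ Z, (#(L z) : ℝ)) {k : ℕ} (hk : 0 < k)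
    (hZ : k * 2 ^ #A ≤ δ / 2 * #Z) :
    ∃ G ⊆ A, δ / 2 * #A ≤ #G ∧ k ≤ #{z ∈ Z | L z = G} := by
  set good := {z ∈ Z | δ / 2 * #A ≤ (#(L z) : ℝ)}
  have hgood : δ / 2 * #Z ≤ #good :=
    half_mul_card_le_card_filter_of_mul_card_le_sum (by exact_mod_cast hA.card_pos) hδ
      (fun z hz => by exact_mod_cast card_le_card (hL z hz)) hsum
  have hpigeon : #A.powerset * k ≤ #good := by
    rw [card_powerset]
    exact_mod_cast (show ((2 ^ #A * k : ℕ) : ℝ) ≤ #good by push_cast; linarith)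
  obtain ⟨G, hGA, hkG⟩ := exists_le_card_fiber_of_mul_le_card_of_maps_to
    (fun z hz => mem_powerset.2 (hL z (mem_filter.1 hz).1)) (powerset_nonempty A) hpigeon
  obtain ⟨z, hz⟩ := card_pos.1 (hk.trans_le hkG)
  obtain ⟨hz, hzG⟩ := mem_filter.1 hz
  exact ⟨G, mem_powerset.1 hGA, hzG ▸ (mem_filter.1 hz).2,
    hkG.trans (card_le_card (filter_subset_filter _ (filter_subset _ _)))⟩

end Finset

theorem exists_complete_tripartite {V : Type*} [DecidableEq V] {X Y Z : Finset V}
    {H : Finset (Finset V)} {η : ℝ} (hη : 0 < η) (hη₁ : η ≤ 1)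
    (hH : η * #X * #Y * #Z ≤ #{p ∈ X ×ˢ Y ×ˢ Z | ({p.1, p.2.1, p.2.2} : Finset V) ∈ H})
    {s : ℕ} (hs : 0 < s) (hsX : s ≤ η / 8 * #X) (hsY : s * (8 / η) ^ s ≤ η / 4 * #Y)
    (hsZ : s * 2 ^ (#X * #Y) ≤ η / 2 * #Z) :
    ∃ X' ⊆ X, ∃ Y' ⊆ Y, ∃ Z' ⊆ Z, #X' = s ∧ #Y' = s ∧ #Z' = s ∧
      ∀ x ∈ X', ∀ y ∈ Y', ∀ z ∈ Z', ({x, y, z} : Finset V) ∈ H := by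
  set L : V → Finset (V × V) := fun z => {p ∈ X ×ˢ Y | ({p.1, p.2, z} : Finset V) ∈ H}
  have hlinks : #{p ∈ X ×ˢ Y ×ˢ Z | ({p.1, p.2.1, p.2.2} : Finset V) ∈ H} =
      ∑ z ∈ Z, #(L z) := by
    simp only [L, card_filter, sum_product]
    exact (sum_congr rfl fun _ _ => sum_comm).trans sum_comm
  have hs₁ : (1 : ℝ) ≤ s := by exact_mod_cast hs
  have hX : X.Nonempty := card_pos.1 (by exact_mod_cast (show (0 : ℝ) < #X by nlinarith))
  have hY : Y.Nonempty := card_pos.1 (by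
    have : (0 : ℝ) < s * (8 / η) ^ s := by positivity
    exact_mod_cast (show (0 : ℝ) < #Y by nlinarith))
  obtain ⟨G, hG, hGcard, hsG⟩ := exists_dense_le_card_fiber (Z := Z) (A := X ×ˢ Y) (L := L)
    (fun z _ => filter_subset _ _) (hX.product hY) hη.le
    (by rw [card_product, Nat.cast_mul, ← mul_assoc]; exact_mod_cast hlinks ▸ hH) hs
    (by rwa [card_product])
  rw [card_product, Nat.cast_mul, ← mul_assoc] at hGcard
  have h8 : (4 : ℝ) / (η / 2) = 8 / η := by ring
  obtain ⟨X', hX', Y', hY', hX's, hY's, hG'⟩ :=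
    exists_prod_subset_of_mul_card_le_card (s := s) hG (half_pos hη) (by linarith) hGcard
      (by linarith) (by rw [h8]; linarith)
  obtain ⟨Z', hZ', hZ's⟩ := exists_subset_card_eq hsG
  refine ⟨X', hX', Y', hY', Z', hZ'.trans (filter_subset _ _), hX's, hY's, hZ's,
    fun x hx y hy z hz => ?_⟩
  have hxy : (x, y) ∈ L z := (mem_filter.1 (hZ' hz)).2 ▸ hG' (mk_mem_product hx hy)
  exact (mem_filter.1 hxy).2

lemma mul_log_eight_div_le {η : ℝ} (hη : 0 < η) (hη₁ : η ≤ 1) :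
    η * log (8 / η) ≤ 3 * log 2 := by
  have h8 : log (8 / η) = 3 * log 2 + log η⁻¹ := by
    rw [div_eq_mul_inv, log_mul (by norm_num) (by positivity),
      show (8 : ℝ) = 2 ^ 3 by norm_num, log_pow]
    norm_num
  have hinv : log η⁻¹ ≤ η⁻¹ - 1 := log_le_sub_one_of_pos (by positivity)
  have hη_inv : η * η⁻¹ = 1 := mul_inv_cancel₀ hη.ne'
  have hlog2 : 1 / 3 < log 2 := by linarith [log_two_gt_d9]
  rw [h8]
  nlinarith

lemma mul_logb_eight_div_le {η : ℝ} (hη : 0 < η) (hη₁ : η ≤ 1) :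
    η / 4 * logb 2 (8 / η) ≤ 3 / 4 := by
  rw [logb, ← mul_div_assoc, div_le_iff₀ (log_pos one_lt_two)]
  linarith [mul_log_eight_div_le hη hη₁]

lemma pow_natCeil_mul_logb_le {a c x : ℝ} (ha : 1 ≤ a) (hc : 0 ≤ c) (hx : 1 ≤ x) :
    a ^ ⌈c * logb 2 x⌉₊ ≤ a * x ^ (c * logb 2 a) := by
  have hx₀ : 0 < x := by linarith
  have ha₀ : 0 < a := by linarith
  have ht : 0 ≤ c * logb 2 x := mul_nonneg hc (logb_nonneg one_lt_two hx)
  have hswap : a ^ (c * logb 2 x) = x ^ (c * logb 2 a) := by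
    rw [rpow_def_of_pos ha₀, rpow_def_of_pos hx₀, logb, logb]
    ring_nf
  calc a ^ ⌈c * logb 2 x⌉₊ = a ^ (⌈c * logb 2 x⌉₊ : ℝ) := (rpow_natCast a _).symm
    _ ≤ a ^ (c * logb 2 x + 1) :=
        rpow_le_rpow_of_exponent_le ha (Nat.ceil_lt_add_one ht).le
    _ = a * x ^ (c * logb 2 a) := by rw [rpow_add ha₀, rpow_one, hswap, mul_comm]

lemma isLittleO_mul_logb_add_one_mul_rpow (c : ℝ) :
    (fun t : ℝ => (c * logb 2 t + 1) * t ^ (3 / 4 : ℝ)) =o[atTop] id := by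
  have hquarter : (0 : ℝ) < 1 / 4 := by norm_num
  have hlog : (fun t : ℝ => c * logb 2 t + 1) =o[atTop] fun t => t ^ (1 / 4 : ℝ) := by
    refine IsLittleO.add ?_ ((isLittleO_one_left_iff ℝ).2 ?_)
    · exact ((isLittleO_log_rpow_atTop hquarter).const_mul_left (c / log 2)).congr_left
        fun t => by rw [logb]; ring
    · exact tendsto_norm_atTop_atTop.comp (tendsto_rpow_atTop hquarter)
  refine (hlog.mul_isBigO (isBigO_refl _ _)).congr' EventuallyEq.rfl ?_
  filter_upwards [eventually_gt_atTop 0] with t ht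
  rw [← rpow_add ht]; norm_num

lemma eventually_natCeil_logb_bounds {η : ℝ} (hη : 0 < η) (hη₁ : η ≤ 1) :
    ∀ᶠ n : ℕ in atTop, (⌈η / 4 * logb 2 n⌉₊ : ℝ) ≤ η / 8 * n ∧
      ⌈η / 4 * logb 2 n⌉₊ * (8 / η) ^ ⌈η / 4 * logb 2 n⌉₊ ≤ η / 4 * n := by
  have hc : (0 : ℝ) < η ^ 2 / 32 := by positivity
  filter_upwards [tendsto_natCast_atTop_atTop.eventually
      ((isLittleO_mul_logb_add_one_mul_rpow (η / 4)).def hc),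
    (tendsto_natCast_atTop_atTop (R := ℝ)).eventually_ge_atTop 1] with n hn hn₁
  set s := ⌈η / 4 * logb 2 n⌉₊
  have hlog : 0 ≤ η / 4 * logb 2 n := mul_nonneg (by positivity) (logb_nonneg one_lt_two hn₁)
  have hs : (s : ℝ) ≤ η / 4 * logb 2 n + 1 := (Nat.ceil_lt_add_one hlog).le
  have hrpow : 1 ≤ (n : ℝ) ^ (3 / 4 : ℝ) := one_le_rpow hn₁ (by norm_num)
  have hsmall : (η / 4 * logb 2 n + 1) * (n : ℝ) ^ (3 / 4 : ℝ) ≤ η ^ 2 / 32 * n := by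
    rwa [norm_of_nonneg (by positivity), id, norm_of_nonneg (by positivity)] at hn
  have hpow : (8 / η) ^ s ≤ 8 / η * (n : ℝ) ^ (3 / 4 : ℝ) := by
    have h8 : 1 ≤ 8 / η := by rw [le_div_iff₀ hη]; linarith
    refine (pow_natCeil_mul_logb_le h8 (by positivity) hn₁).trans ?_
    gcongr
    exact mul_logb_eight_div_le hη hη₁
  constructor
  · nlinarith
  · calc (s : ℝ) * (8 / η) ^ s
          ≤ (η / 4 * logb 2 n + 1) * (8 / η * (n : ℝ) ^ (3 / 4 : ℝ)) := by gcongr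
      _ = 8 / η * ((η / 4 * logb 2 n + 1) * (n : ℝ) ^ (3 / 4 : ℝ)) := by ring
      _ ≤ 8 / η * (η ^ 2 / 32 * n) := by gcongr
      _ = η / 4 * n := by field_simp; ring

lemma eventually_natCast_le_mul_two_pow {c : ℝ} (hc : 0 < c) :
    ∀ᶠ m : ℕ in atTop, (m : ℝ) ≤ c * 2 ^ m := by
  filter_upwards [(isLittleO_coe_const_pow_of_one_lt (R := ℝ) one_lt_two).def hc] with m hm
  simpa using hm

lemma natCast_mul_two_pow_sq_le {n m : ℕ} {c : ℝ} (hnm : n < m) (hm : (m : ℝ) ≤ c * 2 ^ m) :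
    (m : ℝ) * 2 ^ (n * n) ≤ c * 2 ^ (m ^ 2) := by
  have hexp : m + n * n ≤ m ^ 2 := by nlinarith
  have hc : 0 ≤ c := by nlinarith [pow_pos (two_pos (α := ℝ)) m, m.cast_nonneg (α := ℝ)]
  calc (m : ℝ) * 2 ^ (n * n) ≤ c * 2 ^ m * 2 ^ (n * n) := by gcongr
    _ = c * 2 ^ (m + n * n) := by rw [pow_add, mul_assoc]
    _ ≤ c * 2 ^ (m ^ 2) := by gcongr; norm_num

theorem stmt8_general (c₁ c₂ η : ℝ) (hc₁ : 0 < c₁) (hc₁' : c₁ < 1) (hc₂ : 0 < c₂)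
    (hη : 0 < η) (hη' : η < 1) :
    ∃ m₀ : ℕ, ∀ m : ℕ, m₀ ≤ m →
    ∀ (V : Type) [DecidableEq V] (X Y Z : Finset V),
    Disjoint X Y → Disjoint X Z → Disjoint Y Z →
    X.card = ⌊c₁ * m⌋₊ → Y.card = ⌊c₁ * m⌋₊ → c₂ * 2 ^ (m ^ 2) ≤ (Z.card : ℝ) →
    ∀ H : Finset (Finset V), (∀ e ∈ H, e.card = 3) →
    η * X.card * Y.card * Z.card ≤
      ((((X ×ˢ Y ×ˢ Z).filter fun p => ({p.1, p.2.1, p.2.2} : Finset V) ∈ H).card : ℕ) : ℝ) →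
    ∃ X' Y' Z' : Finset V, X' ⊆ X ∧ Y' ⊆ Y ∧ Z' ⊆ Z ∧
      X'.card = Y'.card ∧ Y'.card = Z'.card ∧
      η / 4 * Real.logb 2 (X.card : ℝ) ≤ (X'.card : ℝ) ∧
      ∀ x ∈ X', ∀ y ∈ Y', ∀ z ∈ Z', ({x, y, z} : Finset V) ∈ H := by
  have hfloor : Tendsto (fun m : ℕ => ⌊c₁ * m⌋₊) atTop atTop :=
    tendsto_nat_floor_atTop.comp (tendsto_natCast_atTop_atTop.const_mul_atTop hc₁)
  obtain ⟨m₀, hm₀⟩ := eventually_atTop.1 <|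
    (hfloor.eventually (eventually_natCeil_logb_bounds hη hη'.le)).and <|
    (hfloor.eventually_ge_atTop 2).and <|
    (eventually_natCast_le_mul_two_pow (by positivity : 0 < η * c₂ / 2)).and
      (eventually_ge_atTop 1)
  refine ⟨m₀, fun m hm V _ X Y Z _ _ _ hX hY hZ H _ hH => ?_⟩
  obtain ⟨⟨hsX, hsY⟩, hn, hm₂, hm₁⟩ := hm₀ m hm
  set n := ⌊c₁ * m⌋₊
  set s := ⌈η / 4 * logb 2 n⌉₊
  have hnm : n < m := (Nat.floor_lt (by positivity)).2 <| by
    have : (1 : ℝ) ≤ m := by exact_mod_cast hm₁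
    nlinarith
  have hs : 0 < s :=
    Nat.ceil_pos.2 (mul_pos (by positivity) (logb_pos one_lt_two (by exact_mod_cast hn)))
  have hsm : (s : ℝ) ≤ m := by
    have : (n : ℝ) < m := by exact_mod_cast hnm
    nlinarith
  have hsZ : (s : ℝ) * 2 ^ (#X * #Y) ≤ η / 2 * #Z := by
    rw [hX, hY]
    calc (s : ℝ) * 2 ^ (n * n) ≤ m * 2 ^ (n * n) := by gcongr
      _ ≤ η * c₂ / 2 * 2 ^ (m ^ 2) := natCast_mul_two_pow_sq_le hnm hm₂
      _ = η / 2 * (c₂ * 2 ^ (m ^ 2)) := by ring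
      _ ≤ η / 2 * #Z := by gcongr
  obtain ⟨X', hX', Y', hY', Z', hZ', hX's, hY's, hZ's, hcomplete⟩ :=
    exists_complete_tripartite hη hη'.le hH hs (hX ▸ hsX) (hY ▸ hsY) hsZ
  exact ⟨X', Y', Z', hX', hY', hZ', hX's.trans hY's.symm, hY's.trans hZ's.symm,
    hX's ▸ hX ▸ Nat.le_ceil _, hcomplete⟩

/-- For constants `c₁, c₂, η ∈ (0,1)` and `m` large: if `X, Y, Z` are pairwise disjoint
with `|X| = |Y| = ⌊c₁m⌋`, `|Z| ≥ c₂·2^(m²)` and a 3-graph `H` has at least `η|X||Y||Z|`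
crossing edges, then there are `X' ⊆ X`, `Y' ⊆ Y`, `Z' ⊆ Z` with
`|X'| = |Y'| = |Z'| ≥ (η/4)·log₂|X|` spanning a complete 3-partite subgraph. -/
theorem stmt8 (c₁ c₂ η : ℝ) (hc₁ : 0 < c₁) (hc₁' : c₁ < 1) (hc₂ : 0 < c₂) (hc₂' : c₂ < 1)
    (hη : 0 < η) (hη' : η < 1) :
    ∃ m₀ : ℕ, ∀ m : ℕ, m₀ ≤ m →
    ∀ (V : Type) [DecidableEq V] (X Y Z : Finset V),
    Disjoint X Y → Disjoint X Z → Disjoint Y Z →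
    X.card = ⌊c₁ * m⌋₊ → Y.card = ⌊c₁ * m⌋₊ → c₂ * 2 ^ (m ^ 2) ≤ (Z.card : ℝ) →
    ∀ H : Finset (Finset V), (∀ e ∈ H, e.card = 3) →
    η * X.card * Y.card * Z.card ≤
      ((((X ×ˢ Y ×ˢ Z).filter fun p => ({p.1, p.2.1, p.2.2} : Finset V) ∈ H).card : ℕ) : ℝ) →
    ∃ X' Y' Z' : Finset V, X' ⊆ X ∧ Y' ⊆ Y ∧ Z' ⊆ Z ∧
      X'.card = Y'.card ∧ Y'.card = Z'.card ∧
      η / 4 * Real.logb 2 (X.card : ℝ) ≤ (X'.card : ℝ) ∧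
      ∀ x ∈ X', ∀ y ∈ Y', ∀ z ∈ Z', ({x, y, z} : Finset V) ∈ H :=
  stmt8_general c₁ c₂ η hc₁ hc₁' hc₂ hη hη'
end

section
/- For all constants c₁, c₂, η ∈ (0,1) there exists m₀ such that for every integer m ≥ m₀ the following holds: let A and B be disjoint finite sets with |A| = ⌊c₁·m⌋ and |B| ≥ c₂·2^(m²), and let H be a 3-graph in which every edge consists of one vertex of A and two vertices of B, with at least η·|A|·C(|B|,2) edges. Then there exist A′ ⊆ A and disjoint B′, B″ ⊆ B with |A′| = |B′| = |B″| ≥ ⌊η·|A|/2⌋ such that every triple {a,b′,b″} with a ∈ A′, b′ ∈ B′, b″ ∈ B″ is an edge of H. -/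
/-!
Call `{x ∈ A | p ∪ {x} ∈ H}` the link of a pair `p ⊆ B`. By averaging, at least an `η/2` fraction
of the pairs have links of size at least `t = ⌊η|A|/2⌋`, and as `A` has at most `2^|A|` subsets of
size `t`, a single `t`-set `S ⊆ A` lies in the links of at least `η|B|²/2^(|A|+3)` pairs. The
Kővári–Sós–Turán double count (Jensen's inequality applied to `∑ v, C(deg v, t)`) finds a
complete bipartite `K_{t,t}` in the graph of these pairs, because `2^(|A|t) t^t ≤ 2^(c₁² m² + o(m²))`
is negligible against `|B| ≥ c₂ 2^(m²)`.
-/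

open Finset Filter

theorem Nat.pow_le_pow_mul_choose {d t : ℕ} (h : t ≤ d) : d ^ t ≤ t ^ t * d.choose t := by
  have key : d ^ t * t.factorial ≤ t ^ t * d.descFactorial t :=
    calc d ^ t * t.factorial = ∏ i ∈ range t, d * (t - i) := by
          rw [prod_mul_distrib, prod_const, card_range, ← Nat.descFactorial_eq_prod_range,
            Nat.descFactorial_self]
      _ ≤ ∏ i ∈ range t, t * (d - i) := prod_le_prod' fun i _ => by
          rw [Nat.mul_sub, Nat.mul_sub, Nat.mul_comm d t]
          exact Nat.sub_le_sub_left (Nat.mul_le_mul_right i h) _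
      _ = t ^ t * d.descFactorial t := by
          rw [prod_mul_distrib, prod_const, card_range, ← Nat.descFactorial_eq_prod_range]
  rw [Nat.descFactorial_eq_factorial_mul_choose, Nat.mul_left_comm] at key
  exact Nat.le_of_mul_le_mul_right (by simpa only [Nat.mul_comm] using key) t.factorial_pos

theorem Nat.pow_le_pow_mul_choose_add_one (d t : ℕ) : d ^ t ≤ t ^ t * (d.choose t + 1) := by
  rcases le_or_gt t d with h | h
  · exact (Nat.pow_le_pow_mul_choose h).trans (Nat.mul_le_mul_left _ (Nat.le_succ _))
  · exact (Nat.pow_le_pow_left h.le t).trans (Nat.le_mul_of_pos_right _ (Nat.succ_pos _))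

theorem Finset.card_mul_pow_sum_le {ι α : Type*} [Semiring α] [LinearOrder α]
    [IsStrictOrderedRing α] [ExistsAddOfLE α] {s : Finset ι} {f : ι → α}
    (hf : ∀ i ∈ s, 0 ≤ f i) (t : ℕ) :
    #s * (∑ i ∈ s, f i) ^ t ≤ #s ^ t * ∑ i ∈ s, f i ^ t := by
  cases t with
  | zero => simp
  | succ k =>
    calc (#s : α) * (∑ i ∈ s, f i) ^ (k + 1) ≤ #s * (#s ^ k * ∑ i ∈ s, f i ^ (k + 1)) := by
          gcongr; exact pow_sum_le_card_mul_sum_pow hf k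
      _ = #s ^ (k + 1) * ∑ i ∈ s, f i ^ (k + 1) := by rw [pow_succ', mul_assoc]

theorem Finset.sum_le_mul_card_filter_le_add {ι : Type*} {s : Finset ι} {f : ι → ℕ} {M : ℕ}
    (hf : ∀ i ∈ s, f i ≤ M) (t : ℕ) :
    ∑ i ∈ s, f i ≤ M * #{i ∈ s | t ≤ f i} + t * #s := by
  rw [← sum_filter_add_sum_filter_not s (t ≤ f ·)]
  gcongr
  · calc _ ≤ #{i ∈ s | t ≤ f i} • M :=
          sum_le_card_nsmul _ _ _ fun i hi => hf i (mem_filter.1 hi).1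
      _ = M * #{i ∈ s | t ≤ f i} := by rw [smul_eq_mul, Nat.mul_comm]
  · calc _ ≤ #{i ∈ s | ¬t ≤ f i} • t :=
          sum_le_card_nsmul _ _ _ fun i hi => (not_le.1 (mem_filter.1 hi).2).le
      _ ≤ t * #s := by rw [smul_eq_mul, Nat.mul_comm]; gcongr; exact filter_subset _ _

section DoubleCounting

variable {α β : Type*} (X : Finset α) (s : Finset β) (r : α → β → Prop)
  [∀ a b, Decidable (r a b)] (t : ℕ)

theorem Finset.sum_choose_card_filter_eq_sum_card_filter_forall :
    ∑ a ∈ X, (#{b ∈ s | r a b}).choose t = ∑ T ∈ s.powersetCard t, #{a ∈ X | ∀ b ∈ T, r a b} := by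
  have hcount (a : α) :
      #{T ∈ s.powersetCard t | ∀ b ∈ T, r a b} = (#{b ∈ s | r a b}).choose t := by
    rw [← card_powersetCard]
    congr 1
    ext T
    simp only [mem_filter, mem_powersetCard, subset_iff]
    grind
  simp_rw [← hcount]
  exact sum_card_bipartiteAbove_eq_sum_card_bipartiteBelow _

variable {X s r t}

theorem Finset.exists_lt_card_filter_forall_of_mul_choose_lt {j : ℕ}
    (h : j * (#s).choose t < ∑ a ∈ X, (#{b ∈ s | r a b}).choose t) :
    ∃ T ∈ s.powersetCard t, j < #{a ∈ X | ∀ b ∈ T, r a b} := by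
  rw [sum_choose_card_filter_eq_sum_card_filter_forall, ← card_powersetCard, mul_comm, ← smul_eq_mul, ← sum_const] at h
  exact exists_lt_of_sum_lt h

theorem Finset.exists_sum_choose_le_choose_mul_card_filter_forall (ht : t ≤ #s) :
    ∃ T ∈ s.powersetCard t,
      ∑ a ∈ X, (#{b ∈ s | r a b}).choose t ≤ (#s).choose t * #{a ∈ X | ∀ b ∈ T, r a b} := by
  obtain ⟨T, hT, hmax⟩ := exists_max_image (s.powersetCard t)
    (fun T => #{a ∈ X | ∀ b ∈ T, r a b}) (powersetCard_nonempty.2 ht)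
  refine ⟨T, hT, ?_⟩
  rw [sum_choose_card_filter_eq_sum_card_filter_forall, ← card_powersetCard, ← smul_eq_mul]
  exact sum_le_card_nsmul _ _ _ hmax

end DoubleCounting

theorem Finset.card_le_sum_card_filter_of_forall_exists {α β γ : Type*} [DecidableEq γ]
    {X : Finset α} {Y : Finset β} {s : Finset γ} (f : α → β → γ)
    (hs : ∀ c ∈ s, ∃ a ∈ X, ∃ b ∈ Y, f a b = c) :
    #s ≤ ∑ a ∈ X, #{b ∈ Y | f a b ∈ s} :=
  calc #s ≤ #(X.biUnion fun a => {b ∈ Y | f a b ∈ s}.image (f a)) := card_le_card fun c hc => by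
        obtain ⟨a, ha, b, hb, rfl⟩ := hs c hc
        exact mem_biUnion.2 ⟨a, ha, mem_image.2 ⟨b, mem_filter.2 ⟨hb, hc⟩, rfl⟩⟩
    _ ≤ ∑ a ∈ X, #({b ∈ Y | f a b ∈ s}.image (f a)) := card_biUnion_le
    _ ≤ ∑ a ∈ X, #{b ∈ Y | f a b ∈ s} := sum_le_sum fun _ _ => card_image_le

theorem Finset.card_le_sum_card_filter_pair_mem {V : Type*} [DecidableEq V] {B : Finset V}
    {E : Finset (Finset V)} (hE : E ⊆ B.powersetCard 2) :
    #E ≤ ∑ v ∈ B, #{u ∈ B | {v, u} ∈ E} := by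
  refine card_le_sum_card_filter_of_forall_exists (fun v u => ({v, u} : Finset V)) fun p hp => ?_
  obtain ⟨hpB, hp2⟩ := mem_powersetCard.1 (hE hp)
  obtain ⟨x, y, -, rfl⟩ := card_eq_two.1 hp2
  exact ⟨x, hpB (mem_insert_self _ _), y, hpB (by simp), rfl⟩

theorem card_le_sum_card_filter_insert_mem {V : Type*} [DecidableEq V] {A B : Finset V}
    {H : Finset (Finset V)} (hAB : Disjoint A B)
    (hH : ∀ e ∈ H, e.card = 3 ∧ (e ∩ A).card = 1 ∧ (e ∩ B).card = 2) :
    #H ≤ ∑ p ∈ B.powersetCard 2, #{x ∈ A | insert x p ∈ H} := by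
  refine card_le_sum_card_filter_of_forall_exists (fun p x => insert x p) fun e he => ?_
  obtain ⟨he3, heA, heB⟩ := hH e he
  obtain ⟨x, hx⟩ := card_eq_one.1 heA
  obtain ⟨hxe, hxA⟩ := mem_inter.1 (hx ▸ mem_singleton_self x)
  have hxB : x ∉ e ∩ B := fun h => disjoint_left.1 hAB hxA (mem_inter.1 h).2
  refine ⟨e ∩ B, mem_powersetCard.2 ⟨inter_subset_right, heB⟩, x, hxA, ?_⟩
  exact eq_of_subset_of_card_le (insert_subset hxe inter_subset_left)
    (by rw [card_insert_of_notMem hxB, heB, he3])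

theorem exists_biclique_of_mul_pow_card_lt {V : Type*} [DecidableEq V] {B : Finset V}
    {E : Finset (Finset V)} (hE : E ⊆ B.powersetCard 2) {t : ℕ}
    (h : 2 * t ^ (t + 1) * #B ^ (2 * t) < #B * #E ^ t) :
    ∃ T U : Finset V, T ⊆ B ∧ U ⊆ B ∧ Disjoint T U ∧ #T = t ∧ #U = t ∧
      ∀ b ∈ T, ∀ u ∈ U, {b, u} ∈ E := by
  obtain rfl | ht := t.eq_zero_or_pos
  · exact ⟨∅, ∅, by simp⟩
  set n := #B
  have hdeg : t ^ t * n ^ t * (t * n ^ t + n) <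
      t ^ t * n ^ t * (∑ v ∈ B, (#{u ∈ B | {v, u} ∈ E}).choose t + n) :=
    calc t ^ t * n ^ t * (t * n ^ t + n) ≤ t ^ t * n ^ t * (t * n ^ t + t * n ^ t) := by
          gcongr
          exact (Nat.le_self_pow ht.ne' n).trans (Nat.le_mul_of_pos_left _ ht)
      _ = 2 * t ^ (t + 1) * n ^ (2 * t) := by ring
      _ < n * #E ^ t := h
      _ ≤ n * (∑ v ∈ B, #{u ∈ B | {v, u} ∈ E}) ^ t := by
          gcongr; exact card_le_sum_card_filter_pair_mem hE
      _ ≤ n ^ t * ∑ v ∈ B, #{u ∈ B | {v, u} ∈ E} ^ t :=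
          card_mul_pow_sum_le (fun _ _ => Nat.zero_le _) t
      _ ≤ n ^ t * ∑ v ∈ B, t ^ t * ((#{u ∈ B | {v, u} ∈ E}).choose t + 1) := by
          gcongr; exact Nat.pow_le_pow_mul_choose_add_one _ _
      _ = t ^ t * n ^ t * (∑ v ∈ B, (#{u ∈ B | {v, u} ∈ E}).choose t + n) := by
          rw [← mul_sum, sum_add_distrib, sum_const, smul_eq_mul, mul_one]; ring
  have hsum : t * n.choose t < ∑ v ∈ B, (#{u ∈ B | {v, u} ∈ E}).choose t := by
    have := Nat.lt_of_mul_lt_mul_left hdeg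
    calc t * n.choose t ≤ t * n ^ t := Nat.mul_le_mul_left _ (Nat.choose_le_pow _ _)
      _ < _ := by omega
  obtain ⟨T, hT, hW⟩ := exists_lt_card_filter_forall_of_mul_choose_lt hsum
  obtain ⟨U, hUW, hU⟩ := exists_subset_card_eq hW.le
  obtain ⟨hTB, hTt⟩ := mem_powersetCard.1 hT
  have hUT {u} (hu : u ∈ U) : ∀ b ∈ T, {u, b} ∈ E := (mem_filter.1 (hUW hu)).2
  refine ⟨T, U, hTB, fun u hu => (mem_filter.1 (hUW hu)).1, ?_, hTt, hU, fun b hb u hu => ?_⟩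
  · -- a common neighbour `u` of `T` is not in `T`, since `{u, u}` is not a pair
    refine disjoint_right.2 fun u hu huT => ?_
    simpa using (mem_powersetCard.1 (hE (hUT hu u huT))).2
  · rw [pair_comm]; exact hUT hu b hb

theorem exists_powersetCard_dense_common_link {V : Type*} [DecidableEq V] {A B : Finset V}
    {H : Finset (Finset V)} (hAB : Disjoint A B)
    (hH : ∀ e ∈ H, e.card = 3 ∧ (e ∩ A).card = 1 ∧ (e ∩ B).card = 2)
    (hA : 0 < #A) (hB : 2 ≤ #B) {η : ℝ} (hη : 0 ≤ η)
    (hcount : η * #A * ((#B).choose 2 : ℝ) ≤ #H) {t : ℕ} (hta : t ≤ #A)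
    (ht : (t : ℝ) ≤ η * #A / 2) :
    ∃ S ∈ A.powersetCard t,
      η * #B ^ 2 ≤ 2 ^ (#A + 3) * #{p ∈ B.powersetCard 2 | ∀ x ∈ S, insert x p ∈ H} := by
  obtain ⟨S, hS, hSmax⟩ := exists_sum_choose_le_choose_mul_card_filter_forall
    (X := B.powersetCard 2) (r := fun p x => insert x p ∈ H) hta
  refine ⟨S, hS, ?_⟩
  set heavy := #{p ∈ B.powersetCard 2 | t ≤ #{x ∈ A | insert x p ∈ H}} with heavy_def
  have hsplit : #H ≤ #A * heavy + t * (#B).choose 2 := by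
    have := sum_le_mul_card_filter_le_add (s := B.powersetCard 2)
      (f := fun p => #{x ∈ A | insert x p ∈ H}) (fun p _ => card_filter_le A _) t
    rw [card_powersetCard] at this
    exact (card_le_sum_card_filter_insert_mem hAB hH).trans this
  have hpick : heavy ≤ 2 ^ #A * #{p ∈ B.powersetCard 2 | ∀ x ∈ S, insert x p ∈ H} :=
    calc heavy ≤ ∑ p ∈ B.powersetCard 2, (#{x ∈ A | insert x p ∈ H}).choose t := by
          rw [heavy_def, card_filter]
          exact sum_le_sum fun p _ => by
            split_ifs with h
            exacts [Nat.choose_pos h, Nat.zero_le _]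
      _ ≤ (#A).choose t * #{p ∈ B.powersetCard 2 | ∀ x ∈ S, insert x p ∈ H} := hSmax
      _ ≤ _ := Nat.mul_le_mul_right _ (Nat.choose_le_two_pow _ _)
  have hheavy : η * (#B).choose 2 ≤ 2 * heavy := by
    have hsplit' : (#H : ℝ) ≤ #A * heavy + t * (#B).choose 2 := by exact_mod_cast hsplit
    have hlight : (t : ℝ) * (#B).choose 2 ≤ η * #A / 2 * (#B).choose 2 := by gcongr
    refine le_of_mul_le_mul_left ?_ (show (0 : ℝ) < #A by exact_mod_cast hA)
    linarith
  have hsq : ((#B : ℕ) : ℝ) ^ 2 ≤ 4 * (#B).choose 2 := by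
    have : (2 : ℝ) ≤ #B := by exact_mod_cast hB
    rw [Nat.cast_choose_two]; nlinarith
  have hpick' : (heavy : ℝ) ≤ 2 ^ #A * #{p ∈ B.powersetCard 2 | ∀ x ∈ S, insert x p ∈ H} := by
    exact_mod_cast hpick
  calc η * #B ^ 2 ≤ η * (4 * (#B).choose 2) := by gcongr
    _ ≤ 4 * (2 * heavy) := by linarith
    _ ≤ _ := by rw [pow_add]; linarith

theorem eventually_mul_pow_mul_pow_lt_pow_sq {b : ℝ} (hb : 1 < b) (C : ℝ) {K : ℝ} (hK : 0 < K) :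
    ∀ᶠ m : ℕ in atTop, C * m ^ (m + 1) * K ^ m < b ^ (m ^ 2) := by
  have hlin {r : ℝ} (hr : 1 < r) (D : ℝ) : ∀ᶠ m : ℕ in atTop, D * m < r ^ m := by
    have := ((tendsto_pow_const_div_const_pow_of_one_lt 1 hr).const_mul D).eventually
      (gt_mem_nhds (show D * 0 < 1 by simp))
    filter_upwards [this] with m hm
    rw [pow_one, ← mul_div_assoc, div_lt_one (by positivity)] at hm
    exact hm
  filter_upwards [hlin one_lt_two C, hlin hb (2 * K), eventually_gt_atTop 0] with m h₁ h₂ hm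
  calc C * m ^ (m + 1) * K ^ m = (C * m) * (K * m) ^ m := by ring
    _ < 2 ^ m * (K * m) ^ m := by gcongr
    _ = (2 * K * m) ^ m := by ring
    _ ≤ (b ^ m) ^ m := by gcongr
    _ = b ^ (m ^ 2) := by rw [← pow_mul, sq]

theorem eventually_mul_pow_mul_two_pow_pow_lt {c : ℝ} (hc : c < 1) {C κ K : ℝ} (hC : 0 ≤ C)
    (hκ : 0 < κ) (hK : 1 ≤ K) :
    ∀ᶠ m : ℕ in atTop, ∀ a t : ℕ, (a : ℝ) ≤ c * m → t ≤ a →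
      C * t ^ (t + 1) * (2 ^ a * K) ^ t < κ * 2 ^ (m ^ 2) := by
  -- `a ^ 2 ≤ c * m ^ 2`, so the factor `2 ^ a ^ 2` leaves `(2 ^ (1 - c)) ^ m ^ 2` to beat the rest
  have hb : (1 : ℝ) < 2 ^ (1 - c) := Real.one_lt_rpow one_lt_two (by linarith)
  filter_upwards [eventually_mul_pow_mul_pow_lt_pow_sq hb (C / κ) (by positivity : 0 < K),
    eventually_ge_atTop 1] with m hm hm1 a t hac hta
  have ha0 : (0 : ℝ) ≤ a := a.cast_nonneg
  have ham : (a : ℝ) ≤ m := hac.trans (by nlinarith)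
  have htm : (t : ℝ) ≤ m := (Nat.cast_le.2 hta).trans ham
  have hm1' : (1 : ℝ) ≤ m := by exact_mod_cast hm1
  have hsq : (a : ℝ) ^ 2 ≤ c * m ^ 2 := by nlinarith
  have hgap : (2 : ℝ) ^ a ^ 2 * (2 ^ (1 - c)) ^ m ^ 2 ≤ 2 ^ m ^ 2 := by
    rw [← Real.rpow_mul_natCast zero_le_two, ← Real.rpow_natCast 2 (a ^ 2),
      ← Real.rpow_add two_pos, ← Real.rpow_natCast 2 (m ^ 2)]
    exact Real.rpow_le_rpow_of_exponent_le one_le_two (by push_cast; linarith)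
  have hm' : C * m ^ (m + 1) * K ^ m < κ * (2 ^ (1 - c)) ^ m ^ 2 := by
    rwa [div_mul_eq_mul_div, div_mul_eq_mul_div, div_lt_iff₀ hκ, mul_comm _ κ] at hm
  have hpow_t : (t : ℝ) ^ (t + 1) ≤ m ^ (m + 1) :=
    (pow_le_pow_left₀ t.cast_nonneg htm _).trans
      (pow_le_pow_right₀ hm1' (Nat.add_le_add_right (Nat.cast_le.1 htm) 1))
  have hpow_a : (2 ^ a * K) ^ t ≤ 2 ^ a ^ 2 * K ^ m :=
    calc (2 ^ a * K) ^ t ≤ (2 ^ a * K) ^ a :=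
          pow_le_pow_right₀ (one_le_mul_of_one_le_of_one_le (one_le_pow₀ one_le_two) hK) hta
      _ = 2 ^ a ^ 2 * K ^ a := by rw [mul_pow, ← pow_mul, sq]
      _ ≤ 2 ^ a ^ 2 * K ^ m := by gcongr; exact Nat.cast_le.1 ham
  calc C * t ^ (t + 1) * (2 ^ a * K) ^ t ≤ C * m ^ (m + 1) * (2 ^ a ^ 2 * K ^ m) := by
        gcongr
    _ = 2 ^ a ^ 2 * (C * m ^ (m + 1) * K ^ m) := by ring
    _ < 2 ^ a ^ 2 * (κ * (2 ^ (1 - c)) ^ m ^ 2) := by gcongr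
    _ ≤ κ * 2 ^ m ^ 2 := by nlinarith

theorem two_mul_pow_lt_of_density {η : ℝ} (hη : 0 < η) {n e a t : ℕ}
    (hden : η * n ^ 2 ≤ 2 ^ (a + 3) * e) (hsmall : 2 * t ^ (t + 1) * (2 ^ a * (8 / η)) ^ t < n) :
    2 * t ^ (t + 1) * n ^ (2 * t) < n * e ^ t := by
  have hn : (0 : ℝ) < n := lt_of_le_of_lt (by positivity) hsmall
  have hsq : (n : ℝ) ^ 2 ≤ 2 ^ a * (8 / η) * e := by
    refine le_of_mul_le_mul_left (hden.trans_eq ?_) hη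
    field_simp
    ring
  have he : (0 : ℝ) < e :=
    pos_of_mul_pos_right ((pow_pos hn 2).trans_le hsq) (by positivity)
  have hpow : (n : ℝ) ^ (2 * t) ≤ (2 ^ a * (8 / η)) ^ t * e ^ t := by
    rw [pow_mul, ← mul_pow]; gcongr
  have key : (2 * t ^ (t + 1) * n ^ (2 * t) : ℝ) < n * e ^ t :=
    calc (2 * t ^ (t + 1) * n ^ (2 * t) : ℝ)
        ≤ 2 * t ^ (t + 1) * ((2 ^ a * (8 / η)) ^ t * e ^ t) := by gcongr
      _ = 2 * t ^ (t + 1) * (2 ^ a * (8 / η)) ^ t * e ^ t := by ring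
      _ < n * e ^ t := by gcongr
  exact_mod_cast key

theorem stmt9_general (c₁ c₂ η : ℝ) (hc₁ : 0 < c₁) (hc₁' : c₁ < 1) (hc₂ : 0 < c₂)
    (hη : 0 < η) (hη' : η < 1) :
    ∃ m₀ : ℕ, ∀ m : ℕ, m₀ ≤ m →
    ∀ (V : Type) [DecidableEq V] (A B : Finset V), Disjoint A B →
    A.card = ⌊c₁ * m⌋₊ → c₂ * 2 ^ (m ^ 2) ≤ (B.card : ℝ) →
    ∀ H : Finset (Finset V),
    (∀ e ∈ H, e.card = 3 ∧ (e ∩ A).card = 1 ∧ (e ∩ B).card = 2) →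
    η * A.card * (B.card.choose 2 : ℝ) ≤ (H.card : ℝ) →
    ∃ A' B' B'' : Finset V, A' ⊆ A ∧ B' ⊆ B ∧ B'' ⊆ B ∧ Disjoint B' B'' ∧
      A'.card = B'.card ∧ B'.card = B''.card ∧
      ⌊η * A.card / 2⌋₊ ≤ A'.card ∧
      ∀ a ∈ A', ∀ b ∈ B', ∀ b' ∈ B'', ({a, b, b'} : Finset V) ∈ H := by
  have hK : (1 : ℝ) ≤ 8 / η := by rw [le_div_iff₀ hη]; linarith
  have hB₀ : ∀ᶠ m : ℕ in atTop, (2 : ℝ) ≤ c₂ * 2 ^ (m ^ 2) :=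
    (((tendsto_pow_atTop_atTop_of_one_lt one_lt_two).comp
      (tendsto_pow_atTop two_ne_zero)).const_mul_atTop hc₂).eventually_ge_atTop 2
  have hA₀ : ∀ᶠ m : ℕ in atTop, (1 : ℝ) ≤ c₁ * m :=
    (tendsto_natCast_atTop_atTop.const_mul_atTop hc₁).eventually_ge_atTop 1
  obtain ⟨m₀, hm₀⟩ := eventually_atTop.1 (((eventually_mul_pow_mul_two_pow_pow_lt hc₁'
    zero_le_two hc₂ hK).and hB₀).and hA₀)
  refine ⟨m₀, fun m hm V _ A B hAB hA hB H hH hcount => ?_⟩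
  obtain ⟨⟨hgrowth, hB₂⟩, hA₁⟩ := hm₀ m hm
  set t := ⌊η * #A / 2⌋₊
  have ht : (t : ℝ) ≤ η * #A / 2 := Nat.floor_le (by positivity)
  have hAm : (#A : ℝ) ≤ c₁ * m := hA ▸ Nat.floor_le (by positivity)
  have hApos : 0 < #A := hA ▸ Nat.one_le_floor_iff _ |>.2 hA₁
  have hta : t ≤ #A := by
    have : η * #A / 2 ≤ (#A : ℝ) := by nlinarith [(#A).cast_nonneg (α := ℝ)]
    exact_mod_cast ht.trans this
  have hBn : 2 ≤ #B := by exact_mod_cast hB₂.trans hB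
  obtain ⟨S, hS, hdense⟩ :=
    exists_powersetCard_dense_common_link hAB hH hApos hBn hη.le hcount hta ht
  obtain ⟨T, U, hTB, hUB, hTU, hT, hU, hTUE⟩ := exists_biclique_of_mul_pow_card_lt
    (filter_subset _ _) (two_mul_pow_lt_of_density hη hdense ((hgrowth #A t hAm hta).trans_le hB))
  obtain ⟨hSA, hSt⟩ := mem_powersetCard.1 hS
  exact ⟨S, T, U, hSA, hTB, hUB, hTU, hSt.trans hT.symm, hT.trans hU.symm, hSt.ge,
    fun a ha b hb u hu => (mem_filter.1 (hTUE b hb u hu)).2 a ha⟩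

/-- For constants `c₁, c₂, η ∈ (0,1)` and `m` large: if `A, B` are disjoint with
`|A| = ⌊c₁m⌋`, `|B| ≥ c₂·2^(m²)`, and `H` is a 3-graph whose every edge has one vertex
in `A` and two in `B`, with at least `η|A|·C(|B|,2)` edges, then there are `A' ⊆ A` and
disjoint `B', B'' ⊆ B` with `|A'| = |B'| = |B''| ≥ ⌊η|A|/2⌋` spanning a complete
3-partite subgraph. -/
theorem stmt9 (c₁ c₂ η : ℝ) (hc₁ : 0 < c₁) (hc₁' : c₁ < 1) (hc₂ : 0 < c₂) (hc₂' : c₂ < 1)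
    (hη : 0 < η) (hη' : η < 1) :
    ∃ m₀ : ℕ, ∀ m : ℕ, m₀ ≤ m →
    ∀ (V : Type) [DecidableEq V] (A B : Finset V), Disjoint A B →
    A.card = ⌊c₁ * m⌋₊ → c₂ * 2 ^ (m ^ 2) ≤ (B.card : ℝ) →
    ∀ H : Finset (Finset V),
    (∀ e ∈ H, e.card = 3 ∧ (e ∩ A).card = 1 ∧ (e ∩ B).card = 2) →
    η * A.card * (B.card.choose 2 : ℝ) ≤ (H.card : ℝ) →
    ∃ A' B' B'' : Finset V, A' ⊆ A ∧ B' ⊆ B ∧ B'' ⊆ B ∧ Disjoint B' B'' ∧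
      A'.card = B'.card ∧ B'.card = B''.card ∧
      ⌊η * A.card / 2⌋₊ ≤ A'.card ∧
      ∀ a ∈ A', ∀ b ∈ B', ∀ b' ∈ B'', ({a, b, b'} : Finset V) ∈ H :=
  stmt9_general c₁ c₂ η hc₁ hc₁' hc₂ hη hη'
end

section
/- There exist α₀ > 0 and n₀ such that for every α ∈ (0, α₀) and every n ≥ n₀ divisible by 3 the following holds. Let H be a 3-graph on an n-element vertex set V with δ₁(H) ≥ C(n−1,2) − C(2n/3,2) + 1, and let V = A ∪ B be a partition with |A| = n/3, |B| = 2n/3 and e(H|_B) < 6α·C(2n/3,3). Then the set S_B = { b ∈ B : deg(b, B×A) < α^(1/3)·(n/3)·(2n/3 − 1) } satisfies |S_B| ≤ 40α·|B|. -/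
attribute [local instance] Classical.propDecidable

/-- `deg(a, C(B,2))`: the number of 2-element subsets `{b,b'}` of `B` with
`{a,b,b'} ∈ H`. -/
def degA {V : Type} [DecidableEq V] (H : Finset (Finset V)) (B : Finset V) (a : V) : ℕ :=
  ((B.powersetCard 2).filter fun p => insert a p ∈ H).card

/-- `deg(b, B×A)`: the number of pairs `(b', a)` with `b' ∈ B ∖ {b}`, `a ∈ A` and
`{b,b',a} ∈ H`. -/
def degB {V : Type} [DecidableEq V] (H : Finset (Finset V)) (A B : Finset V) (b : V) : ℕ :=
  (((B.erase b) ×ˢ A).filter fun q => ({b, q.1, q.2} : Finset V) ∈ H).card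

/-!
Write `m = n/3`. An edge through `b ∈ B` either lies in `B`, or meets `A` in one vertex (these
are counted by `deg(b, B×A)`), or in two (at most `C(m,2)` of them). Hence the minimum degree
forces every `b ∈ S_B` into at least `(2m-1)(m-1) + 1 - α^(1/3)·m(2m-1) ≥ 1.8m² - 2.9m + 2`
edges of `H|_B`. Each such edge is counted at most three times, so
`|S_B|·(1.8m² - 2.9m + 2) ≤ 3e(H|_B) < 18α·C(2m,3) ≤ 24αm³`, which gives `|S_B| < 80αm`
as soon as `α^(1/3) < 1/10`.
-/

open Finset

section Link

variable {V : Type} [DecidableEq V]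

lemma filter_mem_subset_union_link (H : Finset (Finset V)) (h3 : ∀ e ∈ H, #e = 3)
    {A B : Finset V} (hcover : ∀ v, v ∈ A ∨ v ∈ B) {b : V} (hb : b ∈ B) :
    H.filter (b ∈ ·) ⊆
      (H.filter (· ⊆ B)).filter (b ∈ ·) ∪
        (((B.erase b) ×ˢ A).filter fun q => ({b, q.1, q.2} : Finset V) ∈ H).image
          (fun q => ({b, q.1, q.2} : Finset V)) ∪
        (A.powersetCard 2).image (insert b) := by
  intro e he
  obtain ⟨heH, hbe⟩ := mem_filter.mp he
  obtain ⟨x, y, hxy, hexy⟩ :=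
    card_eq_two.mp (show #(e.erase b) = 2 by rw [card_erase_of_mem hbe, h3 e heH])
  have hx : x ≠ b := (mem_erase.mp (hexy ▸ mem_insert_self x {y})).1
  have hy : y ≠ b := (mem_erase.mp (hexy ▸ mem_insert_of_mem (mem_singleton_self y))).1
  obtain rfl : e = {b, x, y} := by rw [← insert_erase hbe, hexy]
  simp only [mem_union, mem_filter, mem_image, mem_product, mem_erase, mem_powersetCard,
    Prod.exists]
  rcases hcover x with hxA | hxB <;> rcases hcover y with hyA | hyB
  · exact Or.inr ⟨{x, y}, ⟨by simp [insert_subset_iff, hxA, hyA], card_pair hxy⟩, rfl⟩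
  · exact Or.inl <| Or.inr ⟨y, x, ⟨⟨⟨hy, hyB⟩, hxA⟩, by rwa [pair_comm]⟩, by rw [pair_comm]⟩
  · exact Or.inl <| Or.inr ⟨x, y, ⟨⟨⟨hx, hxB⟩, hyA⟩, heH⟩, rfl⟩
  · exact Or.inl <| Or.inl ⟨⟨heH, by simp [insert_subset_iff, hb, hxB, hyB]⟩, hbe⟩

lemma card_filter_mem_le_link (H : Finset (Finset V)) (h3 : ∀ e ∈ H, #e = 3)
    {A B : Finset V} (hcover : ∀ v, v ∈ A ∨ v ∈ B) {b : V} (hb : b ∈ B) :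
    #(H.filter (b ∈ ·)) ≤
      #((H.filter (· ⊆ B)).filter (b ∈ ·)) + degB H A B b + (#A).choose 2 := by
  refine (card_le_card (filter_mem_subset_union_link H h3 hcover hb)).trans ?_
  exact (card_union_le _ _).trans <| add_le_add
    ((card_union_le _ _).trans (Nat.add_le_add_left card_image_le _))
    (card_image_le.trans_eq (card_powersetCard 2 A))

end Link

lemma rpow_one_div_three_lt_one_div_ten {α : ℝ} (h0 : 0 ≤ α) (h : α < 1 / 1000) :
    α ^ ((1 : ℝ) / 3) < 1 / 10 := by
  have h1000 : (1 / 1000 : ℝ) ^ ((1 : ℝ) / 3) = 1 / 10 := by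
    rw [show (1 / 1000 : ℝ) = (1 / 10) ^ (3 : ℝ) by norm_num, ← Real.rpow_mul (by norm_num)]
    norm_num
  exact h1000 ▸ Real.rpow_lt_rpow h0 h (by norm_num)

lemma cast_choose_two_sub_sub {m : ℕ} (hm : 1 ≤ m) :
    ((3 * m - 1).choose 2 : ℝ) - (2 * m).choose 2 - m.choose 2 = (2 * m - 1) * (m - 1) := by
  rw [Nat.cast_choose_two, Nat.cast_choose_two, Nat.cast_choose_two,
    Nat.cast_sub (by omega : 1 ≤ 3 * m)]
  push_cast
  ring

lemma lt_eighty_mul_of_mul_lt {s α t : ℝ} {m : ℕ} (hm : 1 ≤ m) (hα : 0 < α) (ht : t < 1 / 10)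
    (h : s * ((2 * m - 1) * (m - 1) + 1 - t * m * (2 * m - 1)) < 18 * α * (2 * m).choose 3) :
    s < 80 * α * m := by
  have hx : (1 : ℝ) ≤ m := by exact_mod_cast hm
  set x : ℝ := (m : ℝ)
  set L : ℝ := (2 * x - 1) * (x - 1) + 1 - t * x * (2 * x - 1)
  have hL : 18 * x ^ 2 - 29 * x + 20 ≤ 10 * L := by
    have : t * (x * (2 * x - 1)) ≤ 1 / 10 * (x * (2 * x - 1)) :=
      mul_le_mul_of_nonneg_right ht.le (by nlinarith)
    simp only [L]
    nlinarith
  have hL0 : 0 < L := by nlinarith [sq_nonneg (x - 1)]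
  have hchoose : ((2 * m).choose 3 : ℝ) ≤ (2 * x) ^ 3 / 6 := by
    simpa [Nat.factorial] using Nat.choose_le_pow_div (α := ℝ) 3 (2 * m)
  refine lt_of_mul_lt_mul_right (h.trans_le ?_) hL0.le
  nlinarith [mul_le_mul_of_nonneg_left hL (by linarith : (0 : ℝ) ≤ 8 * x),
    mul_nonneg (by linarith : (0 : ℝ) ≤ x) (sq_nonneg (x - 1))]

/-- In the extremal configuration, the set `S_B` of strongly exceptional vertices of `B`
(those with `deg(b, B×A) < α^(1/3)·(n/3)·(2n/3 − 1)`) has size at most `40α·|B|`. -/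
theorem stmt16 :
    ∃ α₀ : ℝ, 0 < α₀ ∧ ∃ n₀ : ℕ, ∀ α : ℝ, 0 < α → α < α₀ → ∀ n : ℕ, n₀ ≤ n → 3 ∣ n →
    ∀ (V : Type) [Fintype V] [DecidableEq V], Fintype.card V = n →
    ∀ H : Finset (Finset V), (∀ e ∈ H, e.card = 3) →
    (∀ v : V, (n - 1).choose 2 - (2 * n / 3).choose 2 + 1 ≤ (H.filter fun e => v ∈ e).card) →
    ∀ A B : Finset V, Disjoint A B → A ∪ B = Finset.univ →
    A.card = n / 3 → B.card = 2 * n / 3 →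
    ((H.filter fun e => e ⊆ B).card : ℝ) < 6 * α * ((2 * n / 3).choose 3 : ℝ) →
    (((B.filter fun b =>
        ((degB H A B b : ℝ) <
          α ^ ((1 : ℝ) / 3) * ((n / 3 : ℕ) : ℝ) * (((2 * n / 3 : ℕ) : ℝ) - 1))).card : ℝ))
      ≤ 40 * α * B.card := by
  refine ⟨1 / 1000, by norm_num, 1, ?_⟩
  rintro α hα hα₀ n hn ⟨m, rfl⟩ V _ _ - H h3 hdeg A B - hcover hA hB hB3
  have hm : 1 ≤ m := by omega
  rw [show 3 * m / 3 = m by omega] at hA ⊢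
  rw [show 2 * (3 * m) / 3 = 2 * m by omega] at hdeg hB hB3 ⊢
  set t := α ^ ((1 : ℝ) / 3)
  set T := H.filter fun e => e ⊆ B
  set S := B.filter fun b => (degB H A B b : ℝ) < t * (m : ℕ) * ((2 * m : ℕ) - 1)
  have hlink : ∀ b ∈ S,
      ((2 * m - 1) * (m - 1) + 1 - t * m * (2 * m - 1) : ℝ) ≤ #(T.filter (b ∈ ·)) := by
    intro b hb
    obtain ⟨hbB, hbS⟩ := mem_filter.mp hb
    have hsplit :
        (#(H.filter (b ∈ ·)) : ℝ) ≤ #(T.filter (b ∈ ·)) + degB H A B b + m.choose 2 := by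
      exact_mod_cast hA ▸
        card_filter_mem_le_link H h3 (fun v => mem_union.mp (hcover ▸ mem_univ v)) hbB
    have hdeg_b : ((3 * m - 1).choose 2 : ℝ) - (2 * m).choose 2 + 1 ≤ #(H.filter (b ∈ ·)) := by
      have := Nat.cast_le (α := ℝ) |>.mpr (hdeg b)
      rwa [Nat.cast_add, Nat.cast_sub (Nat.choose_le_choose 2 (by omega)), Nat.cast_one] at this
    push_cast at hbS
    linarith [cast_choose_two_sub_sub hm]
  have hcount : #S • ((2 * m - 1) * (m - 1) + 1 - t * m * (2 * m - 1) : ℝ) ≤ #T • (3 : ℝ) :=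
    card_nsmul_le_card_nsmul (· ∈ ·) hlink fun e he => by
      exact_mod_cast (card_le_card fun x hx => (mem_filter.mp hx).2).trans_eq
        (h3 e (mem_filter.mp he).1)
  rw [nsmul_eq_mul, nsmul_eq_mul] at hcount
  rw [hB, Nat.cast_mul, Nat.cast_two]
  linarith [lt_eighty_mul_of_mul_lt hm hα (rpow_one_div_three_lt_one_div_ten hα.le hα₀)
    (by linarith : (#S : ℝ) * _ < 18 * α * (2 * m).choose 3)]
end

section
/- For every integer s ≥ 1 there exists N₀ such that for every N ≥ N₀ the following holds: every 3-graph H on N vertices with δ₁(H) ≥ C(s−1,2) + (s−1)·(N−s) + 1 (equivalently, δ₁(H) ≥ C(N−1,2) − C(N−s,2) + 1) contains a matching of size s. -/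
/-!
Take a maximum matching `M` with `k < s` edges, let `W` be the set of uncovered vertices, and
call a covered vertex *big* if more than `6N` edges join it to two vertices of `W`. A big vertex
has such an edge avoiding any six given vertices, so big vertices can be matched greedily into
`W`. By maximality every edge meets `V(M)`, and no edge of `M` has two big vertices (they could
be traded for two disjoint edges into `W`); hence there are `b ≤ k` big vertices.

Averaging over `W` gives an uncovered `w` lying in only `O(k)` edges through a small vertex and
another uncovered vertex. Every other edge at `w` meets a big vertex or has both other vertices in
`V(M)`, so `deg w ≤ C(N-1,2) - C(N-1-b,2) + C(3k,2) + O(k)`. For large `N` the degree condition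
forces `b = k = s - 1`: every edge of `M` has a big vertex, and some edge `e ∋ w` avoids all big
vertices. Trading the at most two edges of `M` met by `e` for edges through their big vertices
into `W`, and adding `e`, enlarges `M`.
-/

open Finset

namespace Nat

theorem choose_two_add (a b : ℕ) : (a + b).choose 2 = a.choose 2 + a * b + b.choose 2 := by
  simp [add_choose_eq, Finset.Nat.antidiagonal_succ]
  ring

theorem choose_two_succ (n : ℕ) : (n + 1).choose 2 = n.choose 2 + n := by
  rw [choose_succ_succ', choose_one_right, add_comm]

theorem choose_two_sub_choose_two_sub_le {n a : ℕ} (ha : a ≤ n) :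
    n.choose 2 - (n - a).choose 2 ≤ a * n := by
  have h := choose_two_add a (n - a)
  rw [Nat.add_sub_cancel' ha] at h
  have ha2 : a.choose 2 ≤ a * a := by simpa [sq] using choose_le_pow a 2
  have : a * (n - a) + a * a = a * n := by rw [← mul_add, Nat.sub_add_cancel ha]
  omega

theorem choose_two_sub_one_add_mul {s n : ℕ} (hs : 1 ≤ s) (hsn : s ≤ n) :
    (s - 1).choose 2 + (s - 1) * (n - s) = (n - 1).choose 2 - (n - s).choose 2 := by
  have h := choose_two_add (s - 1) (n - s)
  rw [show s - 1 + (n - s) = n - 1 by omega] at h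
  omega

end Nat

variable {V : Type*} [DecidableEq V]

namespace Finset

theorem card_filter_powersetCard_two_not_disjoint {X A : Finset V} (hA : A ⊆ X) :
    #{p ∈ X.powersetCard 2 | ¬Disjoint p A} = (#X).choose 2 - (#X - #A).choose 2 := by
  have hdisj : {p ∈ X.powersetCard 2 | Disjoint p A} = (X \ A).powersetCard 2 := by
    ext p
    simp only [mem_filter, mem_powersetCard, subset_sdiff]
    tauto
  have h := card_filter_add_card_filter_not (s := X.powersetCard 2) (fun p => Disjoint p A)
  rw [hdisj, card_powersetCard, card_powersetCard, card_sdiff_of_subset hA] at h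
  omega

theorem card_le_card_of_erase_mem {S T : Finset (Finset V)} (w : V) (hS : ∀ e ∈ S, w ∈ e)
    (hST : ∀ e ∈ S, e.erase w ∈ T) : #S ≤ #T :=
  card_le_card_of_injOn _ hST ((erase_injOn' w).mono hS)

theorem sum_card_filter_mem_le (W : Finset V) {L : Finset (Finset V)} {r : ℕ}
    (hL : ∀ e ∈ L, #e ≤ r) : ∑ w ∈ W, #{e ∈ L | w ∈ e} ≤ #L * r :=
  calc ∑ w ∈ W, #{e ∈ L | w ∈ e} = ∑ e ∈ L, #{w ∈ W | w ∈ e} :=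
        sum_card_bipartiteAbove_eq_sum_card_bipartiteBelow (r := fun w e => w ∈ e)
    _ ≤ ∑ e ∈ L, r := sum_le_sum fun e he =>
        (card_le_card fun _ hw => (mem_filter.1 hw).2).trans (hL e he)
    _ = #L * r := by rw [sum_const, smul_eq_mul]

end Finset

namespace ThreeGraph

def verts (M : Finset (Finset V)) : Finset V := M.biUnion id

theorem mem_verts {M : Finset (Finset V)} {x : V} : x ∈ verts M ↔ ∃ f ∈ M, x ∈ f := by
  simp [verts]

theorem verts_singleton (f : Finset V) : verts {f} = f := by simp [verts]

theorem verts_mono {R M : Finset (Finset V)} (h : R ⊆ M) : verts R ⊆ verts M :=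
  biUnion_subset_biUnion_of_subset_left _ h

theorem card_verts_le {M : Finset (Finset V)} {r : ℕ} (hM : ∀ f ∈ M, #f = r) :
    #(verts M) ≤ r * #M := by
  rw [mul_comm]
  exact card_biUnion_le_card_mul _ _ _ fun f hf => (hM f hf).le

theorem card_verts_inter {M : Finset (Finset V)} (hM : (M : Set (Finset V)).Pairwise Disjoint)
    (X : Finset V) : #(verts M ∩ X) = ∑ f ∈ M, #(f ∩ X) := by
  rw [verts, biUnion_inter, card_biUnion]
  · rfl
  · exact fun f hf g hg hfg => (hM hf hg hfg).mono inter_subset_left inter_subset_left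

def linkIn (H : Finset (Finset V)) (W : Finset V) (u : V) : Finset (Finset V) :=
  {e ∈ H | u ∈ e ∧ e.erase u ⊆ W}

theorem mem_linkIn {H : Finset (Finset V)} {W : Finset V} {u : V} {e : Finset V} :
    e ∈ linkIn H W u ↔ e ∈ H ∧ u ∈ e ∧ e.erase u ⊆ W := mem_filter

structure IsMaximumMatching (H M : Finset (Finset V)) : Prop where
  subset : M ⊆ H
  pairwise_disjoint : (M : Set (Finset V)).Pairwise Disjoint
  card_le : ∀ M' ⊆ H, (M' : Set (Finset V)).Pairwise Disjoint → #M' ≤ #M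

theorem exists_isMaximumMatching (H : Finset (Finset V)) : ∃ M, IsMaximumMatching H M := by
  classical
  obtain ⟨M, hM, hmax⟩ := exists_max_image
    (H.powerset.filter fun M : Finset (Finset V) => (M : Set (Finset V)).Pairwise Disjoint) card
    ⟨∅, by simp⟩
  simp only [mem_filter, mem_powerset] at hM hmax
  exact ⟨M, hM.1, hM.2, fun M' hM'H hM' => hmax M' ⟨hM'H, hM'⟩⟩

section Uniform

variable {H : Finset (Finset V)}

theorem card_filter_erase_subset_le (h3 : ∀ e ∈ H, #e = 3) (w : V) (X : Finset V) :
    #{e ∈ H | w ∈ e ∧ e.erase w ⊆ X} ≤ (#X).choose 2 := by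
  rw [← card_powersetCard]
  refine card_le_card_of_erase_mem w (fun e he => (mem_filter.1 he).2.1) fun e he => ?_
  obtain ⟨heH, hwe, heX⟩ := mem_filter.1 he
  exact mem_powersetCard.2 ⟨heX, by rw [card_erase_of_mem hwe, h3 e heH]⟩

variable [Fintype V]

theorem card_filter_not_disjoint_le (h3 : ∀ e ∈ H, #e = 3) {w : V} {B : Finset V}
    (hwB : w ∉ B) :
    #{e ∈ H | w ∈ e ∧ ¬Disjoint e B} ≤
      (Fintype.card V - 1).choose 2 - (Fintype.card V - 1 - #B).choose 2 := by
  have hBX : B ⊆ univ.erase w := fun b hb => mem_erase.2 ⟨fun h => hwB (h ▸ hb), mem_univ b⟩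
  have hX : #(univ.erase w) = Fintype.card V - 1 := by
    rw [card_erase_of_mem (mem_univ w), card_univ]
  rw [← hX, ← card_filter_powersetCard_two_not_disjoint hBX]
  refine card_le_card_of_erase_mem w (fun e he => (mem_filter.1 he).2.1) fun e he => ?_
  obtain ⟨heH, hwe, heB⟩ := mem_filter.1 he
  simp only [mem_filter, mem_powersetCard, disjoint_erase_comm, erase_eq_of_notMem hwB]
  refine ⟨⟨erase_subset_erase w (subset_univ e), ?_⟩, heB⟩
  rw [card_erase_of_mem hwe, h3 e heH]

theorem exists_mem_linkIn_disjoint (h3 : ∀ e ∈ H, #e = 3) {W A : Finset V} {u : V}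
    (hu : #A * Fintype.card V < #(linkIn H W u)) :
    ∃ e ∈ linkIn H W u, Disjoint (e.erase u) A := by
  by_contra! h
  have hcount :
      #(linkIn H W u) ≤ #{p ∈ (univ : Finset V).powersetCard 2 | ¬Disjoint p A} :=
    card_le_card_of_erase_mem u (fun e he => (mem_linkIn.1 he).2.1) fun e he => by
      obtain ⟨heH, hue, -⟩ := mem_linkIn.1 he
      simp [card_erase_of_mem hue, h3 e heH, h e he]
  rw [card_filter_powersetCard_two_not_disjoint (subset_univ A), card_univ] at hcount
  have := Nat.choose_two_sub_choose_two_sub_le (card_le_univ A)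
  omega

/-- Greedy matching: the edge chosen for a vertex of `U` has to avoid `A`, the edges chosen
before it and the remaining vertices of `U`; by `hA` these are at most six vertices. -/
theorem exists_matching_of_lt_card_linkIn (h3 : ∀ e ∈ H, #e = 3) {W U : Finset V}
    (hU : ∀ u ∈ U, 6 * Fintype.card V < #(linkIn H W u)) {A : Finset V} (hAU : Disjoint A U)
    (hA : #A + 3 * #U ≤ 9) :
    ∃ S ⊆ H, (S : Set (Finset V)).Pairwise Disjoint ∧ #S = #U ∧
      ∀ a ∈ S, a ⊆ U ∪ W ∧ Disjoint a A := by
  induction U using Finset.induction_on generalizing A with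
  | empty => exact ⟨∅, empty_subset _, by simp, rfl, by simp⟩
  | insert u U hu ih =>
    rw [card_insert_of_notMem hu] at hA
    have hAU6 : #(A ∪ U) ≤ 6 := (card_union_le A U).trans (by omega)
    obtain ⟨f, hf, hfAU⟩ := exists_mem_linkIn_disjoint h3
      ((Nat.mul_le_mul_right _ hAU6).trans_lt (hU u (mem_insert_self u U)))
    obtain ⟨hfH, huf, hfW⟩ := mem_linkIn.1 hf
    have hfA : Disjoint f A := by
      rw [← insert_erase huf, disjoint_insert_left]
      exact ⟨disjoint_right.1 hAU (mem_insert_self u U), hfAU.mono_right subset_union_left⟩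
    have hfU : Disjoint f U := by
      rw [← insert_erase huf, disjoint_insert_left]
      exact ⟨hu, hfAU.mono_right subset_union_right⟩
    obtain ⟨S, hSH, hS, hScard, hSsub⟩ := ih (fun v hv => hU v (mem_insert_of_mem hv))
      (A := A ∪ f) (disjoint_union_left.2 ⟨hAU.mono_right (subset_insert u U), hfU⟩)
      (by have := card_union_le A f; rw [h3 f hfH] at this; omega)
    have hfS : ∀ a ∈ S, Disjoint f a := fun a ha =>
      ((hSsub a ha).2.mono_right subset_union_right).symm
    have hfnotS : f ∉ S := fun h => ne_empty_of_mem huf (disjoint_self.1 (hfS f h))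
    refine ⟨insert f S, insert_subset hfH hSH, ?_, ?_, ?_⟩
    · rw [coe_insert, Set.pairwise_insert_of_symm]
      exact ⟨hS, fun a ha _ => hfS a ha⟩
    · rw [card_insert_of_notMem hfnotS, hScard, card_insert_of_notMem hu]
    · intro a ha
      rcases mem_insert.1 ha with rfl | ha
      · refine ⟨?_, hfA⟩
        rw [← insert_erase huf]
        exact insert_subset (by simp) (hfW.trans subset_union_right)
      · exact ⟨(hSsub a ha).1.trans (union_subset_union_left (subset_insert u U)),
          (hSsub a ha).2.mono_right subset_union_left⟩

end Uniform

section BigVertices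

variable [Fintype V] {H M : Finset (Finset V)}

def bigVertices (H M : Finset (Finset V)) : Finset V :=
  {u ∈ verts M | 6 * Fintype.card V < #(linkIn H (verts M)ᶜ u)}

def smallLinkEdges (H M : Finset (Finset V)) : Finset (Finset V) :=
  (verts M \ bigVertices H M).biUnion (linkIn H (verts M)ᶜ)

theorem bigVertices_subset_verts : bigVertices H M ⊆ verts M := filter_subset _ _

theorem notMem_bigVertices {w : V} (hw : w ∉ verts M) : w ∉ bigVertices H M :=
  fun h => hw (bigVertices_subset_verts h)

/-- The constant `108`: at most `3 * #M` small vertices, each with at most `6 * card V` edges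
into the uncovered set, each edge counted at most three times, shared among at least
`card V / 2` uncovered vertices. -/
theorem exists_notMem_verts_card_filter_le (h3 : ∀ e ∈ H, #e = 3) (hMH : M ⊆ H)
    (hN : 6 * #M < Fintype.card V) :
    ∃ w ∉ verts M, #{e ∈ smallLinkEdges H M | w ∈ e} ≤ 108 * #M := by
  have hVM : #(verts M) ≤ 3 * #M := card_verts_le fun f hf => h3 f (hMH hf)
  have hW : #(verts M)ᶜ = Fintype.card V - #(verts M) := card_compl _
  have hL : #(smallLinkEdges H M) ≤ 3 * #M * (6 * Fintype.card V) := by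
    refine (card_biUnion_le_card_mul _ _ _ fun u hu => not_lt.1 fun h => ?_).trans
      (Nat.mul_le_mul_right _ ((card_le_card sdiff_subset).trans hVM))
    exact (mem_sdiff.1 hu).2 (mem_filter.2 ⟨(mem_sdiff.1 hu).1, h⟩)
  have hsum := sum_card_filter_mem_le (verts M)ᶜ (L := smallLinkEdges H M) (r := 3)
    fun e he => by
      obtain ⟨u, -, he⟩ := mem_biUnion.1 he
      exact (h3 e (mem_linkIn.1 he).1).le
  have hWne : ((verts M)ᶜ).Nonempty := card_pos.1 (by omega)
  have hNW : Fintype.card V ≤ 2 * #(verts M)ᶜ := by omega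
  obtain ⟨w, hw, hwle⟩ := exists_le_of_sum_le hWne
      (f := fun w => #{e ∈ smallLinkEdges H M | w ∈ e}) (g := fun _ => 108 * #M) <| by
    rw [sum_const, smul_eq_mul]
    calc _ ≤ #(smallLinkEdges H M) * 3 := hsum
      _ ≤ 3 * #M * (6 * Fintype.card V) * 3 := Nat.mul_le_mul_right _ hL
      _ ≤ 3 * #M * (6 * (2 * #(verts M)ᶜ)) * 3 := by gcongr
      _ = #(verts M)ᶜ * (108 * #M) := by ring
  exact ⟨w, mem_compl.1 hw, hwle⟩

namespace IsMaximumMatching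

theorem card_le_of_exchange (hM : IsMaximumMatching H M) {R S : Finset (Finset V)} (hR : R ⊆ M)
    (hSH : S ⊆ H) (hS : (S : Set (Finset V)).Pairwise Disjoint) (hne : ∀ a ∈ S, a.Nonempty)
    (hsub : ∀ a ∈ S, a ⊆ verts R ∪ (verts M)ᶜ) : #S ≤ #R := by
  have hdisj : ∀ a ∈ S, ∀ b ∈ M \ R, Disjoint a b := by
    intro a ha b hb
    obtain ⟨hbM, hbR⟩ := mem_sdiff.1 hb
    rw [disjoint_left]
    intro x hxa hxb
    rcases mem_union.1 (hsub a ha hxa) with hx | hx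
    · obtain ⟨g, hgR, hxg⟩ := mem_verts.1 hx
      exact disjoint_left.1 (hM.pairwise_disjoint (hR hgR) hbM fun h => hbR (h ▸ hgR)) hxg hxb
    · exact mem_compl.1 hx (mem_verts.2 ⟨b, hbM, hxb⟩)
  have hSM : Disjoint S (M \ R) := disjoint_left.2 fun a haS haM =>
    (hne a haS).ne_empty (disjoint_self.1 (hdisj a haS a haM))
  have hunion : ((S ∪ (M \ R) : Finset (Finset V)) : Set (Finset V)).Pairwise Disjoint := by
    rw [coe_union, Set.pairwise_union_of_symm]
    exact ⟨hS, hM.pairwise_disjoint.mono (by simp), fun a ha b hb _ => hdisj a ha b hb⟩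
  have := hM.card_le _ (union_subset hSH (sdiff_subset.trans hM.subset)) hunion
  rw [card_union_of_disjoint hSM, card_sdiff_of_subset hR] at this
  have := card_le_card hR
  omega

theorem not_disjoint_verts (hM : IsMaximumMatching H M) {e : Finset V} (he : e ∈ H)
    (hne : e.Nonempty) : ¬Disjoint e (verts M) := by
  intro hdisj
  have := hM.card_le_of_exchange (empty_subset M) (singleton_subset_iff.2 he) (by simp)
    (by simpa using hne) (by simpa [verts, subset_compl_iff_disjoint_right] using hdisj)
  simp at this

theorem card_inter_bigVertices_le_one (hM : IsMaximumMatching H M) (h3 : ∀ e ∈ H, #e = 3)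
    {f : Finset V} (hf : f ∈ M) : #(f ∩ bigVertices H M) ≤ 1 := by
  have hf3 : #(f ∩ bigVertices H M) ≤ 3 :=
    (card_le_card inter_subset_left).trans (h3 f (hM.subset hf)).le
  obtain ⟨S, hSH, hS, hScard, hSsub⟩ := exists_matching_of_lt_card_linkIn h3
    (U := f ∩ bigVertices H M) (W := (verts M)ᶜ)
    (fun u hu => (mem_filter.1 (mem_inter.1 hu).2).2) (disjoint_empty_left _)
    (by rw [card_empty]; omega)
  have := hM.card_le_of_exchange (singleton_subset_iff.2 hf) hSH hS
    (fun a ha => card_pos.1 (by rw [h3 a (hSH ha)]; norm_num)) fun a ha => by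
      rw [verts_singleton]
      exact (hSsub a ha).1.trans (union_subset_union_left inter_subset_left)
  rwa [card_singleton, hScard] at this

theorem card_bigVertices_eq_sum (hM : IsMaximumMatching H M) :
    #(bigVertices H M) = ∑ f ∈ M, #(f ∩ bigVertices H M) := by
  rw [← card_verts_inter hM.pairwise_disjoint, inter_eq_right.2 bigVertices_subset_verts]

theorem card_bigVertices_le (hM : IsMaximumMatching H M) (h3 : ∀ e ∈ H, #e = 3) :
    #(bigVertices H M) ≤ #M := by
  rw [hM.card_bigVertices_eq_sum, card_eq_sum_ones M]
  exact sum_le_sum fun f hf => hM.card_inter_bigVertices_le_one h3 hf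

theorem card_inter_bigVertices_eq_one (hM : IsMaximumMatching H M) (h3 : ∀ e ∈ H, #e = 3)
    (hB : #(bigVertices H M) = #M) {f : Finset V} (hf : f ∈ M) :
    #(f ∩ bigVertices H M) = 1 := by
  rw [hM.card_bigVertices_eq_sum, card_eq_sum_ones M] at hB
  exact (sum_eq_sum_iff_of_le fun f hf => hM.card_inter_bigVertices_le_one h3 hf).1 hB f hf

/-- The edges `R` of `M` meeting `e` are at most two, as `e` also has an uncovered vertex; they
are traded for `e` together with greedily chosen edges through their big vertices. -/
theorem not_disjoint_bigVertices (hM : IsMaximumMatching H M) (h3 : ∀ e ∈ H, #e = 3)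
    (hB : #(bigVertices H M) = #M) {w : V} (hw : w ∉ verts M) {e : Finset V} (he : e ∈ H)
    (hwe : w ∈ e) : ¬Disjoint e (bigVertices H M) := by
  intro heB
  set R := {f ∈ M | ¬Disjoint f e}
  have hRM : R ⊆ M := filter_subset _ _
  have hR := hM.pairwise_disjoint.mono (coe_subset.2 hRM)
  have hR2 : #R ≤ 2 := calc
    #R = ∑ f ∈ R, 1 := card_eq_sum_ones R
    _ ≤ ∑ f ∈ R, #(f ∩ e) := sum_le_sum fun f hf =>
        card_pos.2 (not_disjoint_iff_nonempty_inter.1 (mem_filter.1 hf).2)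
    _ = #(verts R ∩ e) := (card_verts_inter hR e).symm
    _ ≤ #(e.erase w) := card_le_card fun x hx => mem_erase.2
        ⟨fun hxw => hw (hxw ▸ verts_mono hRM (mem_inter.1 hx).1), (mem_inter.1 hx).2⟩
    _ = 2 := by rw [card_erase_of_mem hwe, h3 e he]
  have hU : #(verts R ∩ bigVertices H M) = #R := by
    rw [card_verts_inter hR, card_eq_sum_ones R]
    exact sum_congr rfl fun f hf => hM.card_inter_bigVertices_eq_one h3 hB (hRM hf)
  obtain ⟨S, hSH, hS, hScard, hSsub⟩ := exists_matching_of_lt_card_linkIn h3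
    (U := verts R ∩ bigVertices H M) (W := (verts M)ᶜ)
    (fun u hu => (mem_filter.1 (mem_inter.1 hu).2).2) (heB.mono_right inter_subset_right)
    (by rw [h3 e he, hU]; omega)
  have heS : e ∉ S := fun h => ne_empty_of_mem hwe (disjoint_self.1 (hSsub e h).2)
  have := hM.card_le_of_exchange hRM (insert_subset he hSH)
    (by
      rw [coe_insert, Set.pairwise_insert_of_symm]
      exact ⟨hS, fun a ha _ => (hSsub a ha).2.symm⟩)
    (fun a ha => card_pos.1 (by rw [h3 a (insert_subset he hSH ha)]; norm_num))
    fun a ha => by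
      rcases mem_insert.1 ha with rfl | ha
      · intro x hx
        by_cases hxM : x ∈ verts M
        · obtain ⟨f, hf, hxf⟩ := mem_verts.1 hxM
          exact mem_union_left _ (mem_verts.2
            ⟨f, mem_filter.2 ⟨hf, not_disjoint_iff.2 ⟨x, hxf, hx⟩⟩, hxf⟩)
        · exact mem_union_right _ (mem_compl.2 hxM)
      · exact (hSsub a ha).1.trans (union_subset_union_left inter_subset_left)
  rw [card_insert_of_notMem heS, hScard, hU] at this
  omega

theorem mem_smallLinkEdges (hM : IsMaximumMatching H M) (h3 : ∀ e ∈ H, #e = 3) {w : V}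
    (hw : w ∉ verts M) {e : Finset V} (he : e ∈ H) (hwe : w ∈ e)
    (heB : Disjoint e (bigVertices H M)) (heM : ¬e.erase w ⊆ verts M) :
    e ∈ smallLinkEdges H M := by
  obtain ⟨u, heu, huM⟩ := not_disjoint_iff.1 (hM.not_disjoint_verts he ⟨w, hwe⟩)
  obtain ⟨x, hxe, hxM⟩ := not_subset.1 heM
  obtain ⟨hxw, hxe⟩ := mem_erase.1 hxe
  have huw : u ≠ w := fun h => hw (h ▸ huM)
  have hux : u ≠ x := fun h => hxM (h ▸ huM)
  have he3 : e = {u, w, x} := (eq_of_subset_of_card_le (by simp [insert_subset_iff, *])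
    (by rw [h3 e he, card_eq_three.2 ⟨u, w, x, huw, hux, hxw.symm, rfl⟩])).symm
  refine mem_biUnion.2 ⟨u, mem_sdiff.2 ⟨huM, fun huB => disjoint_left.1 heB heu huB⟩,
    mem_linkIn.2 ⟨he, heu, ?_⟩⟩
  rw [he3, erase_insert (by simp [huw, hux])]
  simp [insert_subset_iff, hw, hxM]

theorem card_filter_mem_le_of_notMem_verts (hM : IsMaximumMatching H M) (h3 : ∀ e ∈ H, #e = 3)
    {w : V} (hw : w ∉ verts M) :
    #{e ∈ H | w ∈ e} ≤ ((Fintype.card V - 1).choose 2 -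
      (Fintype.card V - 1 - #(bigVertices H M)).choose 2) + (3 * #M).choose 2 +
      #{e ∈ smallLinkEdges H M | w ∈ e} := by
  have hcover : {e ∈ H | w ∈ e} ⊆ {e ∈ H | w ∈ e ∧ ¬Disjoint e (bigVertices H M)} ∪
      {e ∈ H | w ∈ e ∧ e.erase w ⊆ verts M} ∪ {e ∈ smallLinkEdges H M | w ∈ e} := by
    intro e he
    obtain ⟨heH, hwe⟩ := mem_filter.1 he
    by_cases heB : Disjoint e (bigVertices H M)
    · by_cases heM : e.erase w ⊆ verts M
      · simp [heH, hwe, heM]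
      · exact mem_union_right _
          (mem_filter.2 ⟨hM.mem_smallLinkEdges h3 hw heH hwe heB heM, hwe⟩)
    · simp [heH, hwe, heB]
  calc _ ≤ _ := card_le_card hcover
    _ ≤ _ := (card_union_le _ _).trans (Nat.add_le_add_right (card_union_le _ _) _)
    _ ≤ _ := by
      gcongr
      · exact card_filter_not_disjoint_le h3 (notMem_bigVertices hw)
      · exact (card_filter_erase_subset_le h3 w _).trans
          (Nat.choose_le_choose 2 (card_verts_le fun f hf => h3 f (hM.subset hf)))

end IsMaximumMatching

end BigVertices

end ThreeGraph

open ThreeGraph in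
theorem stmt19_general (s : ℕ) :
    ∃ N₀ : ℕ, ∀ N : ℕ, N₀ ≤ N →
    ∀ (V : Type) [Fintype V] [DecidableEq V], Fintype.card V = N →
    ∀ H : Finset (Finset V), (∀ e ∈ H, e.card = 3) →
    (∀ v : V, (s - 1).choose 2 + (s - 1) * (N - s) + 1 ≤ (H.filter fun e => v ∈ e).card) →
    ∃ M : Finset (Finset V), M ⊆ H ∧
      (M : Set (Finset V)).Pairwise (fun e f => Disjoint e f) ∧
      M.card = s := by
  refine ⟨(3 * s).choose 2 + 110 * s, fun N hN V _ _ hV H h3 hdeg => ?_⟩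
  obtain ⟨M, hM⟩ := exists_isMaximumMatching H
  by_cases hsM : s ≤ #M
  · obtain ⟨S, hSM, hS⟩ := exists_subset_card_eq hsM
    exact ⟨S, hSM.trans hM.subset, hM.pairwise_disjoint.mono (coe_subset.2 hSM), hS⟩
  exfalso
  subst hV
  obtain ⟨w, hw, hwL⟩ := exists_notMem_verts_card_filter_le h3 hM.subset (by omega)
  have hlow := hdeg w
  rw [Nat.choose_two_sub_one_add_mul (by omega) (by omega)] at hlow
  have hup := hM.card_filter_mem_le_of_notMem_verts h3 hw
  have hb := hM.card_bigVertices_le h3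
  set b := #(bigVertices H M)
  by_cases hsb : b + 2 ≤ s
  · have h3M : (3 * #M).choose 2 ≤ (3 * s).choose 2 := Nat.choose_le_choose 2 (by omega)
    have hNb := Nat.choose_le_choose 2 (Nat.sub_le (Fintype.card V - 1) b)
    have hsN := Nat.choose_le_choose 2
      (show Fintype.card V - s + 1 ≤ Fintype.card V - 1 - b by omega)
    rw [Nat.choose_two_succ] at hsN
    omega
  · have hE1 := card_filter_not_disjoint_le h3 (notMem_bigVertices (H := H) hw)
    rw [show Fintype.card V - 1 - b = Fintype.card V - s by omega] at hE1
    obtain ⟨e, he, heB⟩ := exists_mem_notMem_of_card_lt_card (hE1.trans_lt hlow)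
    obtain ⟨heH, hwe⟩ := mem_filter.1 he
    exact hM.not_disjoint_bigVertices h3 (by omega) hw heH hwe (by simpa [heH, hwe] using heB)

/-- For every `s ≥ 1` there is `N₀` such that every 3-graph on `N ≥ N₀` vertices with
`δ₁(H) ≥ C(s−1,2) + (s−1)(N−s) + 1` contains a matching of size `s`. -/
theorem stmt19 (s : ℕ) (hs : 1 ≤ s) :
    ∃ N₀ : ℕ, ∀ N : ℕ, N₀ ≤ N →
    ∀ (V : Type) [Fintype V] [DecidableEq V], Fintype.card V = N →
    ∀ H : Finset (Finset V), (∀ e ∈ H, e.card = 3) →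
    (∀ v : V, (s - 1).choose 2 + (s - 1) * (N - s) + 1 ≤ (H.filter fun e => v ∈ e).card) →
    ∃ M : Finset (Finset V), M ⊆ H ∧
      (M : Set (Finset V)).Pairwise (fun e f => Disjoint e f) ∧
      M.card = s :=
  stmt19_general s
end
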